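/- arXiv:2210.05761 — 7 statements merged into one kernel-verified Lean document; each statement's English description precedes it below -/
import Mathlib

section
/- Let (H, 𝒰, ℰ, 𝒥, σ) be a Z-problem with σ self-adjoint, σ₁₁ ≥ 0, and σ₁₁ boundedly invertible, and set σ⁎ = σ₀₀ − σ₀₁σ₁₁⁻¹σ₁₀. Then σ⁎ is self-adjoint, for every E₀ ∈ 𝒰 the quantity ⟨E₀, σ⁎E₀⟩ equals the minimum over E ∈ ℰ of ⟨E₀ + E, σ(E₀ + E)⟩ (these inner products are real), the minimizer is unique and equals E = −σ₁₁⁻¹σ₁₀E₀, and σ⁎ ≤ σ₀₀. -/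
/-!
Completing the square: for `E₀ ∈ 𝒰` and `E ∈ ℰ`,
`⟨E₀ + E, σ (E₀ + E)⟩ = ⟨E₀, σ⁎ E₀⟩ + ⟨w, σ₁₁ w⟩` with `w = E + σ₁₁⁻¹ σ₁₀ E₀`.
As `σ₁₁ ≥ 0`, the minimum is attained where `⟨w, σ₁₁ w⟩ = 0`, which for a positive operator
forces `σ₁₁ w = 0`, i.e. `w = 0`. Moreover `σ₀₀ - σ⁎ = σ₁₀* σ₁₁⁻¹ σ₁₀`, and
`σ₁₁⁻¹ = (σ₁₁⁻¹)* σ₁₁ σ₁₁⁻¹` is positive, which gives both the self-adjointness of `σ⁎`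
and `σ⁎ ≤ σ₀₀`.
-/

/-- The Schur complement `σ₀₀ - σ₀₁ σ₁₁⁻¹ σ₁₀` of a bounded operator `σ` with respect to
orthogonal projections `P0, P1`, where `ρ` is the inverse of the block
`σ₁₁ = P1 σ P1 : H₁ → H₁` extended by zero. -/
noncomputable def schurCLM {𝕂 : Type*} [RCLike 𝕂] {H : Type*} [NormedAddCommGroup H]
    [InnerProductSpace 𝕂 H] (P0 P1 σ ρ : H →L[𝕂] H) : H →L[𝕂] H :=
  (P0 ∘L (σ ∘L P0)) - (P0 ∘L (σ ∘L P1)) ∘L (ρ ∘L (P1 ∘L (σ ∘L P0)))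

open RCLike ContinuousLinearMap
open scoped InnerProductSpace InnerProduct

section

variable {𝕂 H : Type*} [RCLike 𝕂] [NormedAddCommGroup H] [InnerProductSpace 𝕂 H]

theorem ContinuousLinearMap.IsPositive.apply_eq_zero_of_re_inner_eq_zero {T : H →L[𝕂] H}
    (hT : T.IsPositive) {x : H} (hx : re ⟪x, T x⟫_𝕂 = 0) : T x = 0 := by
  -- The quadratic `t ↦ re ⟪T (x + t T x), x + t T x⟫ ≥ 0` has no constant term by `hx`, so
  -- its discriminant `(2 ‖T x‖²)²` must vanish.
  have hquad (t : ℝ) : 0 ≤ re ⟪T (T x), T x⟫_𝕂 * (t * t) + 2 * ‖T x‖ ^ 2 * t + 0 := by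
    have := hT.re_inner_nonneg_left (x + (t : 𝕂) • T x)
    rw [inner_re_symm] at hx
    simp only [map_add, map_smul, inner_add_left, inner_add_right, inner_smul_left,
      inner_smul_right, conj_ofReal, hT.inner_left_eq_inner_right (T x) x] at this
    simp only [map_add, re_ofReal_mul, hx, inner_self_eq_norm_sq_to_K, ← ofReal_pow,
      ofReal_re] at this
    linarith
  simpa [discrim] using discrim_le_zero hquad

variable [CompleteSpace H]

theorem IsSelfAdjoint.inner_apply_comm {T : H →L[𝕂] H} (hT : IsSelfAdjoint T) (x y : H) :
    ⟪T x, y⟫_𝕂 = ⟪x, T y⟫_𝕂 :=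
  hT.isSymmetric x y

theorem IsSelfAdjoint.inner_apply_right_of_apply_eq {P : H →L[𝕂] H} (hP : IsSelfAdjoint P)
    {x : H} (hx : P x = x) (y : H) : ⟪x, P y⟫_𝕂 = ⟪x, y⟫_𝕂 := by
  rw [← hP.adjoint_eq, adjoint_inner_right, hx]

theorem IsSelfAdjoint.inner_apply_left_of_apply_eq {P : H →L[𝕂] H} (hP : IsSelfAdjoint P)
    {x : H} (hx : P x = x) (y : H) : ⟪P y, x⟫_𝕂 = ⟪y, x⟫_𝕂 := by
  rw [← hP.adjoint_eq, adjoint_inner_left, hx]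

theorem ContinuousLinearMap.IsPositive.isPositive_of_comp_eq {P A ρ : H →L[𝕂] H}
    (hA : A.IsPositive) (hP : IsSelfAdjoint P) (hPρ : P ∘L ρ = ρ) (hAρ : A ∘L ρ = P) :
    ρ.IsPositive := by
  have : ρ = ρ† ∘L A ∘L ρ := calc
    ρ = P† ∘L ρ := by rw [hP.adjoint_eq, hPρ]
    _ = ρ† ∘L A ∘L ρ := by rw [← hAρ, adjoint_comp, hA.isSelfAdjoint.adjoint_eq, comp_assoc]
  rw [this]
  exact hA.adjoint_conj ρ

variable {P0 P1 σ ρ : H →L[𝕂] H}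

theorem sub_schurCLM_eq (hP0 : IsSelfAdjoint P0) (hP1 : IsSelfAdjoint P1)
    (hσ : IsSelfAdjoint σ) :
    P0 ∘L σ ∘L P0 - schurCLM P0 P1 σ ρ = (P1 ∘L σ ∘L P0)† ∘L ρ ∘L P1 ∘L σ ∘L P0 := by
  rw [schurCLM, sub_sub_cancel, adjoint_comp, adjoint_comp, hP0.adjoint_eq, hP1.adjoint_eq,
    hσ.adjoint_eq]
  rfl

theorem isPositive_sub_schurCLM (hP0 : IsSelfAdjoint P0) (hP1 : IsSelfAdjoint P1)
    (hσ : IsSelfAdjoint σ) (hρ : ρ.IsPositive) :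
    (P0 ∘L σ ∘L P0 - schurCLM P0 P1 σ ρ).IsPositive := by
  rw [sub_schurCLM_eq hP0 hP1 hσ]
  exact hρ.adjoint_conj _

theorem isSelfAdjoint_schurCLM (hP0 : IsSelfAdjoint P0) (hP1 : IsSelfAdjoint P1)
    (hσ : IsSelfAdjoint σ) (hρ : ρ.IsPositive) : IsSelfAdjoint (schurCLM P0 P1 σ ρ) := by
  have h00 : IsSelfAdjoint (P0 ∘L σ ∘L P0) := by
    simpa only [hP0.adjoint_eq] using hσ.adjoint_conj P0
  simpa using h00.sub (isPositive_sub_schurCLM hP0 hP1 hσ hρ).isSelfAdjoint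

theorem inner_apply_add_eq_inner_schurCLM_add (hP0 : IsSelfAdjoint P0) (hP1 : IsSelfAdjoint P1)
    (hσ : IsSelfAdjoint σ) (hρ : IsSelfAdjoint ρ) (hP1P1 : P1 ∘L P1 = P1) (hP1ρ : P1 ∘L ρ = ρ)
    (hAρ : (P1 ∘L σ ∘L P1) ∘L ρ = P1) {E₀ E : H} (hE₀ : P0 E₀ = E₀) (hE : P1 E = E) :
    ⟪E₀ + E, σ (E₀ + E)⟫_𝕂 = ⟪E₀, schurCLM P0 P1 σ ρ E₀⟫_𝕂 +
      ⟪E + ρ ((P1 ∘L σ ∘L P0) E₀), (P1 ∘L σ ∘L P1) (E + ρ ((P1 ∘L σ ∘L P0) E₀))⟫_𝕂 := by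
  have hA : IsSelfAdjoint (P1 ∘L σ ∘L P1) := by
    simpa only [hP1.adjoint_eq] using hσ.adjoint_conj P1
  have hPρ (x : H) : P1 (ρ x) = ρ x := congr($hP1ρ x)
  have hAρ' (x : H) : (P1 ∘L σ ∘L P1) (ρ x) = P1 x := congr($hAρ x)
  have hAE : (P1 ∘L σ ∘L P1) E = P1 (σ E) := by simp [hE]
  have hσE₀ (y : H) (hy : P1 y = y) : ⟪E₀, σ y⟫_𝕂 = ⟪P1 (σ E₀), y⟫_𝕂 := by
    rw [← hσ.inner_apply_comm, hP1.inner_apply_left_of_apply_eq hy]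
  have hschur : ⟪E₀, schurCLM P0 P1 σ ρ E₀⟫_𝕂 =
      ⟪E₀, σ E₀⟫_𝕂 - ⟪P1 (σ E₀), ρ (P1 (σ E₀))⟫_𝕂 := by
    simp only [schurCLM, sub_apply, comp_apply, hE₀, hPρ, inner_sub_right,
      hP0.inner_apply_right_of_apply_eq hE₀, hσE₀ _ (hPρ _)]
  have hσE : ⟪E, σ E₀⟫_𝕂 = ⟪E, P1 (σ E₀)⟫_𝕂 := (hP1.inner_apply_right_of_apply_eq hE _).symm
  have hb : P1 (P1 (σ E₀)) = P1 (σ E₀) := congr($hP1P1 (σ E₀))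
  rw [show (P1 ∘L σ ∘L P0) E₀ = P1 (σ E₀) by simp [hE₀], hschur, map_add, inner_add_left,
    inner_add_right, inner_add_right, hσE₀ E hE, hσE]
  generalize P1 (σ E₀) = b at hb ⊢
  rw [map_add, hAρ', hb, inner_add_left, inner_add_right, inner_add_right,
    ← hA.inner_apply_comm (ρ b), hAρ', hb, hAE, hP1.inner_apply_right_of_apply_eq hE,
    hρ.inner_apply_comm]
  ring

theorem isLeast_re_inner_schurCLM (hP0 : IsSelfAdjoint P0) (hP1 : IsSelfAdjoint P1)
    (hσ : IsSelfAdjoint σ) (hρ : IsSelfAdjoint ρ) (hA : (P1 ∘L σ ∘L P1).IsPositive)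
    (hP1P1 : P1 ∘L P1 = P1) (hP1ρ : P1 ∘L ρ = ρ) (hAρ : (P1 ∘L σ ∘L P1) ∘L ρ = P1)
    {E₀ : H} (hE₀ : P0 E₀ = E₀) :
    IsLeast {r : ℝ | ∃ E : H, P1 E = E ∧ r = re ⟪E₀ + E, σ (E₀ + E)⟫_𝕂}
      (re ⟪E₀, schurCLM P0 P1 σ ρ E₀⟫_𝕂) := by
  have hPρ (x : H) : P1 (ρ x) = ρ x := congr($hP1ρ x)
  refine ⟨⟨-ρ ((P1 ∘L σ ∘L P0) E₀), by rw [map_neg, hPρ], ?_⟩, ?_⟩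
  · rw [inner_apply_add_eq_inner_schurCLM_add hP0 hP1 hσ hρ hP1P1 hP1ρ hAρ hE₀
      (by rw [map_neg, hPρ])]
    simp
  · rintro r ⟨E, hE, rfl⟩
    rw [inner_apply_add_eq_inner_schurCLM_add hP0 hP1 hσ hρ hP1P1 hP1ρ hAρ hE₀ hE, map_add]
    exact le_add_of_nonneg_right (hA.re_inner_nonneg_right _)

theorem re_inner_apply_add_eq_re_inner_schurCLM_iff (hP0 : IsSelfAdjoint P0)
    (hP1 : IsSelfAdjoint P1) (hσ : IsSelfAdjoint σ) (hρ : IsSelfAdjoint ρ)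
    (hA : (P1 ∘L σ ∘L P1).IsPositive) (hP1P1 : P1 ∘L P1 = P1) (hP1ρ : P1 ∘L ρ = ρ)
    (hρA : ρ ∘L (P1 ∘L σ ∘L P1) = P1) (hAρ : (P1 ∘L σ ∘L P1) ∘L ρ = P1)
    {E₀ E : H} (hE₀ : P0 E₀ = E₀) (hE : P1 E = E) :
    re ⟪E₀ + E, σ (E₀ + E)⟫_𝕂 = re ⟪E₀, schurCLM P0 P1 σ ρ E₀⟫_𝕂 ↔
      E = -ρ ((P1 ∘L σ ∘L P0) E₀) := by
  rw [inner_apply_add_eq_inner_schurCLM_add hP0 hP1 hσ hρ hP1P1 hP1ρ hAρ hE₀ hE, map_add,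
    add_eq_left, ← add_eq_zero_iff_eq_neg]
  set w := E + ρ ((P1 ∘L σ ∘L P0) E₀)
  refine ⟨fun hw => ?_, fun hw => by simp [hw]⟩
  have hPw : P1 w = w := by rw [map_add, hE, ← comp_apply P1 ρ, hP1ρ]
  rw [← hPw, ← hρA, comp_apply, hA.apply_eq_zero_of_re_inner_eq_zero hw, map_zero]

end

theorem stmt_2_general
    {𝕂 : Type*} [RCLike 𝕂]
    {H : Type*} [NormedAddCommGroup H] [InnerProductSpace 𝕂 H] [CompleteSpace H]
    (P0 P1 : H →L[𝕂] H)
    (hP0sa : ContinuousLinearMap.adjoint P0 = P0)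
    (hP1 : P1 ∘L P1 = P1) (hP1sa : ContinuousLinearMap.adjoint P1 = P1)
    (σ : H →L[𝕂] H) (hσ : ContinuousLinearMap.adjoint σ = σ)
    (hpos11 : ∀ y : H, 0 ≤ RCLike.re (inner 𝕂 y ((P1 ∘L (σ ∘L P1)) y) : 𝕂))
    (ρ : H →L[𝕂] H)
    (hρ : P1 ∘L (ρ ∘L P1) = ρ)
    (hρl : ρ ∘L (P1 ∘L (σ ∘L P1)) = P1)
    (hρr : (P1 ∘L (σ ∘L P1)) ∘L ρ = P1) :
    ContinuousLinearMap.adjoint (schurCLM P0 P1 σ ρ) = schurCLM P0 P1 σ ρ ∧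
    (∀ E₀ : H, P0 E₀ = E₀ →
      IsLeast {r : ℝ | ∃ E : H, P1 E = E ∧ r = RCLike.re (inner 𝕂 (E₀ + E) (σ (E₀ + E)) : 𝕂)}
        (RCLike.re (inner 𝕂 E₀ (schurCLM P0 P1 σ ρ E₀) : 𝕂)) ∧
      (∀ E : H, P1 E = E →
        (RCLike.re (inner 𝕂 (E₀ + E) (σ (E₀ + E)) : 𝕂) =
            RCLike.re (inner 𝕂 E₀ (schurCLM P0 P1 σ ρ E₀) : 𝕂) ↔
          E = -(ρ ((P1 ∘L (σ ∘L P0)) E₀))))) ∧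
    (∀ z : H, 0 ≤ RCLike.re (inner 𝕂 z (((P0 ∘L (σ ∘L P0)) - schurCLM P0 P1 σ ρ) z) : 𝕂)) := by
  have hP1ρ : P1 ∘L ρ = ρ := by rw [← hρ, ← comp_assoc, hP1]
  have hA : (P1 ∘L σ ∘L P1).IsPositive := by
    refine isPositive_def'.mpr ⟨?_, fun y => ?_⟩
    · simpa only [hP1sa] using IsSelfAdjoint.adjoint_conj hσ P1
    · rw [reApplyInnerSelf, inner_re_symm]
      exact hpos11 y
  have hρpos : ρ.IsPositive := hA.isPositive_of_comp_eq hP1sa hP1ρ hρr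
  refine ⟨isSelfAdjoint_schurCLM hP0sa hP1sa hσ hρpos, fun E₀ hE₀ => ⟨?_, fun E hE => ?_⟩,
    (isPositive_sub_schurCLM hP0sa hP1sa hσ hρpos).re_inner_nonneg_right⟩
  · exact isLeast_re_inner_schurCLM hP0sa hP1sa hσ hρpos.isSelfAdjoint hA hP1 hP1ρ hρr hE₀
  · exact re_inner_apply_add_eq_re_inner_schurCLM_iff hP0sa hP1sa hσ hρpos.isSelfAdjoint hA hP1
      hP1ρ hρl hρr hE₀ hE

/-- Dirichlet minimization principle for a Z-problem `(H, 𝒰, ℰ, 𝒥, σ)`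
(encoded by mutually orthogonal projections `P0, P1, P2` with sum `1` and ranges
`𝒰, ℰ, 𝒥`): if `σ` is self-adjoint, `σ₁₁ ≥ 0` and `σ₁₁` is boundedly invertible with
inverse `ρ`, then `σ⁎ = σ₀₀ - σ₀₁σ₁₁⁻¹σ₁₀` is self-adjoint, `⟨E₀, σ⁎E₀⟩` is the minimum of
`⟨E₀+E, σ(E₀+E)⟩` over `E ∈ ℰ`, the minimizer is unique, equal to `-σ₁₁⁻¹σ₁₀E₀`, and
`σ⁎ ≤ σ₀₀`. -/
theorem stmt_2
    {𝕂 : Type*} [RCLike 𝕂]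
    {H : Type*} [NormedAddCommGroup H] [InnerProductSpace 𝕂 H] [CompleteSpace H]
    (P0 P1 P2 : H →L[𝕂] H)
    (hP0 : P0 ∘L P0 = P0) (hP0sa : ContinuousLinearMap.adjoint P0 = P0)
    (hP1 : P1 ∘L P1 = P1) (hP1sa : ContinuousLinearMap.adjoint P1 = P1)
    (hP2 : P2 ∘L P2 = P2) (hP2sa : ContinuousLinearMap.adjoint P2 = P2)
    (h01 : P0 ∘L P1 = 0) (h02 : P0 ∘L P2 = 0) (h12 : P1 ∘L P2 = 0)
    (hsum : P0 + P1 + P2 = 1)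
    (σ : H →L[𝕂] H) (hσ : ContinuousLinearMap.adjoint σ = σ)
    (hpos11 : ∀ y : H, 0 ≤ RCLike.re (inner 𝕂 y ((P1 ∘L (σ ∘L P1)) y) : 𝕂))
    (ρ : H →L[𝕂] H)
    (hρ : P1 ∘L (ρ ∘L P1) = ρ)
    (hρl : ρ ∘L (P1 ∘L (σ ∘L P1)) = P1)
    (hρr : (P1 ∘L (σ ∘L P1)) ∘L ρ = P1) :
    ContinuousLinearMap.adjoint (schurCLM P0 P1 σ ρ) = schurCLM P0 P1 σ ρ ∧
    (∀ E₀ : H, P0 E₀ = E₀ →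
      IsLeast {r : ℝ | ∃ E : H, P1 E = E ∧ r = RCLike.re (inner 𝕂 (E₀ + E) (σ (E₀ + E)) : 𝕂)}
        (RCLike.re (inner 𝕂 E₀ (schurCLM P0 P1 σ ρ E₀) : 𝕂)) ∧
      (∀ E : H, P1 E = E →
        (RCLike.re (inner 𝕂 (E₀ + E) (σ (E₀ + E)) : 𝕂) =
            RCLike.re (inner 𝕂 E₀ (schurCLM P0 P1 σ ρ E₀) : 𝕂) ↔
          E = -(ρ ((P1 ∘L (σ ∘L P0)) E₀))))) ∧
    (∀ z : H, 0 ≤ RCLike.re (inner 𝕂 z (((P0 ∘L (σ ∘L P0)) - schurCLM P0 P1 σ ρ) z) : 𝕂)) :=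
  stmt_2_general P0 P1 hP0sa hP1 hP1sa σ hσ hpos11 ρ hρ hρl hρr
end

section
/- Let (H, 𝒰, ℰ, 𝒥, σ) be a Z-problem and suppose σ is boundedly invertible, σ₁₁ : ℰ → ℰ is boundedly invertible, and (σ⁻¹)₂₂ = Γ₂σ⁻¹Γ₂ restricted to 𝒥 is boundedly invertible. Then the Schur complement σ₀₀ − σ₀₁σ₁₁⁻¹σ₁₀ (a bounded operator on 𝒰) is boundedly invertible and its inverse equals the dual Schur complement (σ⁻¹)₀₀ − (σ⁻¹)₀₂((σ⁻¹)₂₂)⁻¹(σ⁻¹)₂₀, where (σ⁻¹)ᵢⱼ = Γᵢσ⁻¹Γⱼ : Hⱼ → Hᵢ. -/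
section Ring

variable {R : Type*} [Ring R]

def schurCompl (p q s r : R) : R := p * s * p - p * s * q * r * q * s * p

theorem mul_eq_zero_swap_of_add_add_eq_one {p0 p1 p2 : R}
    (h0 : IsIdempotentElem p0) (h1 : IsIdempotentElem p1)
    (h01 : p0 * p1 = 0) (h12 : p1 * p2 = 0) (hsum : p0 + p1 + p2 = 1) :
    p1 * p0 = 0 ∧ p2 * p0 = 0 ∧ p2 * p1 = 0 := by
  have h10 : p1 * p0 = 0 := by simpa [mul_add, h1.eq, h12] using congrArg (p1 * ·) hsum
  refine ⟨h10, ?_, ?_⟩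
  · simpa [add_mul, h0.eq, h10] using congrArg (· * p0) hsum
  · simpa [add_mul, h1.eq, h01] using congrArg (· * p1) hsum

theorem exists_column_of_schurCompl {p0 p1 p2 s t r : R}
    (h0 : IsIdempotentElem p0) (h1 : IsIdempotentElem p1) (h2 : IsIdempotentElem p2)
    (h01 : p0 * p1 = 0) (h20 : p2 * p0 = 0) (h21 : p2 * p1 = 0) (hsum : p0 + p1 + p2 = 1)
    (hts : t * s = 1) (hr : p1 * s * p1 * r = p1) :
    ∃ W, p2 * W = W ∧
      p0 * t * schurCompl p0 p1 s r = p0 - p0 * t * W ∧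
      p2 * t * schurCompl p0 p1 s r = -(p2 * t * W) := by
  set K := s - s * p1 * r * p1 * s with hK
  refine ⟨p2 * K * p0, by rw [← mul_assoc, ← mul_assoc, h2.eq], ?_⟩
  have hmid : p1 * K * p0 = 0 := by
    calc _ = p1 * s * p0 - p1 * s * p1 * r * (p1 * s * p0) := by rw [hK]; noncomm_ring
      _ = 0 := by rw [hr, ← mul_assoc, ← mul_assoc, h1.eq, sub_self]
  have hcol : K * p0 = schurCompl p0 p1 s r + p2 * K * p0 := by
    calc _ = (p0 + p1 + p2) * (K * p0) := by rw [hsum, one_mul]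
      _ = p0 * K * p0 + p1 * K * p0 + p2 * K * p0 := by noncomm_ring
      _ = _ := by rw [hmid, add_zero, hK, schurCompl]; noncomm_ring
  have htcol : t * (K * p0) = p0 - p1 * r * p1 * s * p0 := by
    calc _ = t * s * p0 - t * s * (p1 * r * p1 * s * p0) := by rw [hK]; noncomm_ring
      _ = _ := by rw [hts, one_mul, one_mul]
  constructor
  · refine eq_sub_of_add_eq ?_
    rw [← mul_add, ← hcol, mul_assoc, htcol, mul_sub, h0.eq]
    simp only [← mul_assoc, h01, zero_mul, sub_zero]
  · refine eq_neg_of_add_eq_zero_left ?_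
    rw [← mul_add, ← hcol, mul_assoc, htcol, mul_sub, h20]
    simp only [← mul_assoc, h21, zero_mul, sub_zero]

theorem schurCompl_dual_mul_schurCompl {p0 p1 p2 s t r m : R}
    (h0 : IsIdempotentElem p0) (h1 : IsIdempotentElem p1) (h2 : IsIdempotentElem p2)
    (h01 : p0 * p1 = 0) (h20 : p2 * p0 = 0) (h21 : p2 * p1 = 0) (hsum : p0 + p1 + p2 = 1)
    (hts : t * s = 1) (hr : p1 * s * p1 * r = p1) (hm : m * p2 * t * p2 = p2) :
    schurCompl p0 p2 t m * schurCompl p0 p1 s r = p0 := by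
  obtain ⟨W, hW, hrow0, hrow2⟩ :=
    exists_column_of_schurCompl h0 h1 h2 h01 h20 h21 hsum hts hr
  set S := schurCompl p0 p1 s r with hS
  have hp0S : p0 * S = S := by simp only [hS, schurCompl, mul_sub, ← mul_assoc, h0.eq]
  calc schurCompl p0 p2 t m * S
      = p0 * t * (p0 * S) - p0 * t * p2 * m * (p2 * t * (p0 * S)) := by
        rw [schurCompl]; noncomm_ring
    _ = (p0 - p0 * t * W) + p0 * t * p2 * m * (p2 * t * (p2 * W)) := by
        rw [hp0S, hrow0, hrow2, hW]; noncomm_ring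
    _ = (p0 - p0 * t * W) + p0 * t * p2 * (m * p2 * t * p2) * W := by noncomm_ring
    _ = p0 := by rw [hm, mul_assoc _ p2 W, hW, mul_assoc _ p2 W, hW]; abel

end Ring

theorem schurCLM_eq_schurCompl {𝕂 : Type*} [RCLike 𝕂] {H : Type*} [NormedAddCommGroup H]
    [InnerProductSpace 𝕂 H] (P0 P1 σ ρ : H →L[𝕂] H) :
    schurCLM P0 P1 σ ρ = schurCompl P0 P1 σ ρ := by
  simp only [schurCLM, schurCompl, ← ContinuousLinearMap.mul_def, mul_assoc]

theorem stmt_4_general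
    {𝕂 : Type*} [RCLike 𝕂]
    {H : Type*} [NormedAddCommGroup H] [InnerProductSpace 𝕂 H]
    (P0 P1 P2 : H →L[𝕂] H)
    (hP0 : P0 ∘L P0 = P0)
    (hP1 : P1 ∘L P1 = P1)
    (hP2 : P2 ∘L P2 = P2)
    (h01 : P0 ∘L P1 = 0) (h02 : P0 ∘L P2 = 0) (h12 : P1 ∘L P2 = 0)
    (hsum : P0 + P1 + P2 = 1)
    (σ τ : H →L[𝕂] H) (hτl : τ ∘L σ = 1) (hτr : σ ∘L τ = 1)
    (ρ : H →L[𝕂] H)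
    (hρl : ρ ∘L (P1 ∘L (σ ∘L P1)) = P1)
    (hρr : (P1 ∘L (σ ∘L P1)) ∘L ρ = P1)
    (μ : H →L[𝕂] H)
    (hμl : μ ∘L (P2 ∘L (τ ∘L P2)) = P2)
    (hμr : (P2 ∘L (τ ∘L P2)) ∘L μ = P2) :
    ((P0 ∘L (τ ∘L P0)) - (P0 ∘L (τ ∘L P2)) ∘L (μ ∘L (P2 ∘L (τ ∘L P0)))) ∘L
        schurCLM P0 P1 σ ρ = P0 ∧
    schurCLM P0 P1 σ ρ ∘L
        ((P0 ∘L (τ ∘L P0)) - (P0 ∘L (τ ∘L P2)) ∘L (μ ∘L (P2 ∘L (τ ∘L P0)))) = P0 := by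
  change schurCLM P0 P2 τ μ ∘L schurCLM P0 P1 σ ρ = P0 ∧
    schurCLM P0 P1 σ ρ ∘L schurCLM P0 P2 τ μ = P0
  simp only [schurCLM_eq_schurCompl, ← ContinuousLinearMap.mul_def, ← mul_assoc] at *
  obtain ⟨h10, h20, h21⟩ := mul_eq_zero_swap_of_add_add_eq_one hP0 hP1 h01 h12 hsum
  have hsum' : P0 + P2 + P1 = 1 := by rw [← hsum, add_right_comm]
  exact ⟨schurCompl_dual_mul_schurCompl hP0 hP1 hP2 h01 h20 h21 hsum hτl hρr hμl,
    schurCompl_dual_mul_schurCompl hP0 hP2 hP1 h02 h10 h12 hsum' hτr hμr hρl⟩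

/-- For a Z-problem `(H, 𝒰, ℰ, 𝒥, σ)` (encoded by mutually orthogonal
projections `P0, P1, P2` with sum `1` and ranges `𝒰, ℰ, 𝒥`): if `σ` is boundedly
invertible with inverse `τ = σ⁻¹`, the block `σ₁₁` is boundedly invertible with inverse
`ρ` on `ℰ`, and the block `(σ⁻¹)₂₂ = Γ₂σ⁻¹Γ₂|𝒥` is boundedly invertible with inverse `μ`
on `𝒥`, then the Schur complement `σ₀₀ - σ₀₁σ₁₁⁻¹σ₁₀` (as an operator on `𝒰`) is
boundedly invertible with inverse the dual Schur complement
`(σ⁻¹)₀₀ - (σ⁻¹)₀₂((σ⁻¹)₂₂)⁻¹(σ⁻¹)₂₀`. -/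
theorem stmt_4
    {𝕂 : Type*} [RCLike 𝕂]
    {H : Type*} [NormedAddCommGroup H] [InnerProductSpace 𝕂 H] [CompleteSpace H]
    (P0 P1 P2 : H →L[𝕂] H)
    (hP0 : P0 ∘L P0 = P0) (hP0sa : ContinuousLinearMap.adjoint P0 = P0)
    (hP1 : P1 ∘L P1 = P1) (hP1sa : ContinuousLinearMap.adjoint P1 = P1)
    (hP2 : P2 ∘L P2 = P2) (hP2sa : ContinuousLinearMap.adjoint P2 = P2)
    (h01 : P0 ∘L P1 = 0) (h02 : P0 ∘L P2 = 0) (h12 : P1 ∘L P2 = 0)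
    (hsum : P0 + P1 + P2 = 1)
    (σ τ : H →L[𝕂] H) (hτl : τ ∘L σ = 1) (hτr : σ ∘L τ = 1)
    (ρ : H →L[𝕂] H)
    (hρ : P1 ∘L (ρ ∘L P1) = ρ)
    (hρl : ρ ∘L (P1 ∘L (σ ∘L P1)) = P1)
    (hρr : (P1 ∘L (σ ∘L P1)) ∘L ρ = P1)
    (μ : H →L[𝕂] H)
    (hμ : P2 ∘L (μ ∘L P2) = μ)
    (hμl : μ ∘L (P2 ∘L (τ ∘L P2)) = P2)
    (hμr : (P2 ∘L (τ ∘L P2)) ∘L μ = P2) :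
    ((P0 ∘L (τ ∘L P0)) - (P0 ∘L (τ ∘L P2)) ∘L (μ ∘L (P2 ∘L (τ ∘L P0)))) ∘L
        schurCLM P0 P1 σ ρ = P0 ∧
    schurCLM P0 P1 σ ρ ∘L
        ((P0 ∘L (τ ∘L P0)) - (P0 ∘L (τ ∘L P2)) ∘L (μ ∘L (P2 ∘L (τ ∘L P0)))) = P0 :=
  stmt_4_general P0 P1 P2 hP0 hP1 hP2 h01 h02 h12 hsum σ τ hτl hτr ρ hρl hρr μ hμl hμr
end

section
/- Let H = H₀ ⊕ H₁ be an orthogonal decomposition of a finite-dimensional inner product space, and suppose X is a linear operator on H of the form X = [[I, Y*],[0, I]] · [[W, 0],[0, Z]] · [[I, 0],[Y, I]] (block form with respect to H₀ ⊕ H₁) where W : H₀ → H₀ and Z : H₁ → H₁ are self-adjoint and Y : H₀ → H₁ is linear. Then for each u ∈ H₀, the set of pairs (w, v) ∈ H₀ × H₁ satisfying X(u + v) = w is exactly { (Wu, −Z⁺ZYu + v₁) : v₁ ∈ ker Z }, where Z⁺ is the Moore–Penrose pseudoinverse of Z. -/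
/-!
For `u ∈ H₀` and `v ∈ H₁`, the block shapes of `W`, `Z`, `Y` and `Y*` give
`X (u + v) = (W u + Y* z) + z` with `z = Z (v + Y u) ∈ H₁`. So `X (u + v)` lies in `H₀`
exactly when `Z v = -Z (Y u)`, and then it equals `W u`. The solutions `v ∈ H₁` of this
equation are `-Z⁺ Z Y u + (ker Z ∩ H₁)`: the particular solution lies in `H₁` because
`Z⁺ Z = (Z⁺ Z)* = Z (Z⁺)*` has range inside that of `Z`.
-/

open LinearMap

section BlockEntry

variable {R M : Type*} [Ring R] [AddCommGroup M] [Module R M]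

/-- With `P₀ + P₁ = 1`, `IsBlockEntry Pᵢ Pⱼ T` says that `T` is a block operator on
`range P₀ ⊕ range P₁` whose only nonzero entry is the `(i, j)` one. -/
def IsBlockEntry (P Q T : M →ₗ[R] M) : Prop := P ∘ₗ (T ∘ₗ Q) = T

namespace IsBlockEntry

variable {P Q T : M →ₗ[R] M}

theorem apply_eq (h : IsBlockEntry P Q T) (x : M) : P (T (Q x)) = T x :=
  congr($h x)

theorem left_apply (h : IsBlockEntry P Q T) (hP : P ∘ₗ P = P) (x : M) : P (T x) = T x := by
  rw [← h.apply_eq, ← comp_apply P P, hP]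

theorem apply_eq_zero (h : IsBlockEntry P Q T) {Q' : M →ₗ[R] M} (hQ : Q ∘ₗ Q' = 0) {x : M}
    (hx : Q' x = x) : T x = 0 := by
  rw [← h.apply_eq, ← hx, ← comp_apply Q Q', hQ, LinearMap.zero_apply, map_zero, map_zero]

theorem compl_left_apply (h : IsBlockEntry P Q T) {P' : M →ₗ[R] M} (hP : P' ∘ₗ P = 0) (x : M) :
    P' (T x) = 0 := by
  rw [← h.apply_eq, ← comp_apply P' P, hP, LinearMap.zero_apply]

end IsBlockEntry

theorem comp_eq_zero_of_add_eq_one {P₀ P₁ : M →ₗ[R] M} (hP₀ : P₀ ∘ₗ P₀ = P₀)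
    (hsum : P₀ + P₁ = 1) : P₀ ∘ₗ P₁ = 0 := by
  obtain rfl : P₁ = 1 - P₀ := eq_sub_of_add_eq' hsum
  exact IsIdempotentElem.mul_one_sub_self hP₀

theorem comp_eq_zero_of_add_eq_one' {P₀ P₁ : M →ₗ[R] M} (hP₀ : P₀ ∘ₗ P₀ = P₀)
    (hsum : P₀ + P₁ = 1) : P₁ ∘ₗ P₀ = 0 := by
  obtain rfl : P₁ = 1 - P₀ := eq_sub_of_add_eq' hsum
  exact IsIdempotentElem.one_sub_mul_self hP₀

theorem comp_self_of_add_eq_one {P₀ P₁ : M →ₗ[R] M} (hP₀ : P₀ ∘ₗ P₀ = P₀)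
    (hsum : P₀ + P₁ = 1) : P₁ ∘ₗ P₁ = P₁ := by
  obtain rfl : P₁ = 1 - P₀ := eq_sub_of_add_eq' hsum
  exact IsIdempotentElem.one_sub hP₀

theorem and_apply_add_eq_zero_iff_of_inner_inverse {P Z Zp : M →ₗ[R] M}
    (hZp : Z ∘ₗ (Zp ∘ₗ Z) = Z) (hrange : ∀ x, P (Zp (Z x)) = Zp (Z x)) (y v : M) :
    (P v = v ∧ Z (v + y) = 0) ↔ ∃ v₁, P v₁ = v₁ ∧ Z v₁ = 0 ∧ v = -Zp (Z y) + v₁ := by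
  have hZZpZ (x : M) : Z (Zp (Z x)) = Z x := congr($hZp x)
  constructor
  · rintro ⟨hv, hvy⟩
    refine ⟨v + Zp (Z y), ?_, ?_, by abel⟩
    · rw [map_add, hv, hrange]
    · rw [map_add, hZZpZ, ← map_add, hvy]
  · rintro ⟨v₁, hv₁, hZv₁, rfl⟩
    refine ⟨by rw [map_add, map_neg, hrange, hv₁], ?_⟩
    rw [map_add, map_add, map_neg, hZZpZ, hZv₁]
    abel

section BlockFactorization

variable {P₀ P₁ W Z Y Y' : M →ₗ[R] M}

theorem blockFactorization_apply (hP₀ : P₀ ∘ₗ P₀ = P₀) (hsum : P₀ + P₁ = 1)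
    (hW : IsBlockEntry P₀ P₀ W) (hZ : IsBlockEntry P₁ P₁ Z) (hY : IsBlockEntry P₁ P₀ Y)
    (hY' : IsBlockEntry P₀ P₁ Y') {u v : M} (hu : P₀ u = u) (hv : P₁ v = v) :
    ((1 + Y') ∘ₗ ((W + Z) ∘ₗ (1 + Y))) (u + v) = W u + Y' (Z (v + Y u)) + Z (v + Y u) := by
  have h₀₁ := comp_eq_zero_of_add_eq_one hP₀ hsum
  have h₁₀ := comp_eq_zero_of_add_eq_one' hP₀ hsum
  have hYv : Y v = 0 := hY.apply_eq_zero h₀₁ hv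
  have hWv : W v = 0 := hW.apply_eq_zero h₀₁ hv
  have hWYu : W (Y u) = 0 :=
    hW.apply_eq_zero h₀₁ (hY.left_apply (comp_self_of_add_eq_one hP₀ hsum) u)
  have hZu : Z u = 0 := hZ.apply_eq_zero h₁₀ hu
  have hY'Wu : Y' (W u) = 0 := hY'.apply_eq_zero h₁₀ (hW.left_apply hP₀ u)
  simp only [comp_apply, LinearMap.add_apply, Module.End.one_apply, map_add, hYv, hWv, hWYu,
    hZu, hY'Wu, map_zero]
  abel

theorem blockFactorization_apply_eq_iff (hP₀ : P₀ ∘ₗ P₀ = P₀) (hsum : P₀ + P₁ = 1)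
    (hW : IsBlockEntry P₀ P₀ W) (hZ : IsBlockEntry P₁ P₁ Z) (hY : IsBlockEntry P₁ P₀ Y)
    (hY' : IsBlockEntry P₀ P₁ Y') {u : M} (hu : P₀ u = u) (w v : M) :
    (P₀ w = w ∧ P₁ v = v ∧ ((1 + Y') ∘ₗ ((W + Z) ∘ₗ (1 + Y))) (u + v) = w) ↔
      (w = W u ∧ P₁ v = v ∧ Z (v + Y u) = 0) := by
  have h₁₀ := comp_eq_zero_of_add_eq_one' hP₀ hsum
  constructor
  · rintro ⟨hw, hv, hXw⟩
    rw [blockFactorization_apply hP₀ hsum hW hZ hY hY' hu hv] at hXw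
    have hz : Z (v + Y u) = 0 := by
      have h := congr(P₁ $hXw)
      rwa [map_add, map_add, hW.compl_left_apply h₁₀, hY'.compl_left_apply h₁₀,
        hZ.left_apply (comp_self_of_add_eq_one hP₀ hsum), ← hw, ← comp_apply, h₁₀,
        LinearMap.zero_apply, zero_add, zero_add] at h
    rw [hz, map_zero, add_zero, add_zero] at hXw
    exact ⟨hXw.symm, hv, hz⟩
  · rintro ⟨rfl, hv, hz⟩
    refine ⟨hW.left_apply hP₀ u, hv, ?_⟩
    rw [blockFactorization_apply hP₀ hsum hW hZ hY hY' hu hv, hz, map_zero, add_zero, add_zero]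

end BlockFactorization

end BlockEntry

section InnerProductSpace

variable {𝕂 H : Type*} [RCLike 𝕂] [NormedAddCommGroup H] [InnerProductSpace 𝕂 H]
  [FiniteDimensional 𝕂 H]

theorem adjoint_eq_self_of_add_eq_one {P₀ P₁ : H →ₗ[𝕂] H} (hP₀ : adjoint P₀ = P₀)
    (hsum : P₀ + P₁ = 1) : adjoint P₁ = P₁ := by
  obtain rfl : P₁ = 1 - P₀ := eq_sub_of_add_eq' hsum
  rw [map_sub, adjoint_one, hP₀]

theorem IsBlockEntry.adjoint {P Q T : H →ₗ[𝕂] H} (h : IsBlockEntry P Q T) (hP : adjoint P = P)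
    (hQ : adjoint Q = Q) : IsBlockEntry Q P (adjoint T) := by
  unfold IsBlockEntry
  conv_rhs => rw [← h]
  rw [adjoint_comp, adjoint_comp, hP, hQ, comp_assoc]

theorem range_comp_le_range_of_adjoint_comp_eq {Z Zp : H →ₗ[𝕂] H} (hZ : adjoint Z = Z)
    (hZpZ : adjoint (Zp ∘ₗ Z) = Zp ∘ₗ Z) : range (Zp ∘ₗ Z) ≤ range Z := by
  rw [← hZpZ, adjoint_comp, hZ]
  exact range_comp_le_range _ _

end InnerProductSpace

theorem stmt_6_general
    {𝕂 : Type*} [RCLike 𝕂]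
    {H : Type*} [NormedAddCommGroup H] [InnerProductSpace 𝕂 H] [FiniteDimensional 𝕂 H]
    (P0 P1 : H →ₗ[𝕂] H)
    (hP0 : P0 ∘ₗ P0 = P0) (hP0sa : LinearMap.adjoint P0 = P0)
    (hsum : P0 + P1 = 1)
    (W Z Y X : H →ₗ[𝕂] H)
    (hW : P0 ∘ₗ (W ∘ₗ P0) = W)
    (hZ : P1 ∘ₗ (Z ∘ₗ P1) = Z) (hZsa : LinearMap.adjoint Z = Z)
    (hY : P1 ∘ₗ (Y ∘ₗ P0) = Y)
    (hX : X = (1 + LinearMap.adjoint Y) ∘ₗ ((W + Z) ∘ₗ (1 + Y)))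
    (Zp : H →ₗ[𝕂] H)
    (hZp2 : Z ∘ₗ (Zp ∘ₗ Z) = Z)
    (hZp3 : LinearMap.adjoint (Zp ∘ₗ Z) = Zp ∘ₗ Z) :
    ∀ u : H, P0 u = u →
      ∀ w v : H,
        (P0 w = w ∧ P1 v = v ∧ X (u + v) = w) ↔
          (w = W u ∧ ∃ v₁ : H, P1 v₁ = v₁ ∧ Z v₁ = 0 ∧ v = -(Zp (Z (Y u))) + v₁) := by
  have hY' : IsBlockEntry P0 P1 (adjoint Y) :=
    IsBlockEntry.adjoint hY (adjoint_eq_self_of_add_eq_one hP0sa hsum) hP0sa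
  have hrange (x : H) : P1 (Zp (Z x)) = Zp (Z x) := by
    obtain ⟨y, hy⟩ : Zp (Z x) ∈ range Z :=
      range_comp_le_range_of_adjoint_comp_eq hZsa hZp3 (mem_range_self (Zp ∘ₗ Z) x)
    rw [← hy]
    exact IsBlockEntry.left_apply hZ (comp_self_of_add_eq_one hP0 hsum) y
  intro u hu w v
  rw [hX, blockFactorization_apply_eq_iff hP0 hsum hW hZ hY hY' hu,
    and_apply_add_eq_zero_iff_of_inner_inverse hZp2 hrange]

/-- Solutions of the constrained linear equation `X(u+v) = w` for a
block-factorized operator: `H = H₀ ⊕ H₁` is an orthogonal decomposition of a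
finite-dimensional inner product space (encoded by orthogonal projections `P0, P1` with
`P0 + P1 = 1`), `W : H₀ → H₀` and `Z : H₁ → H₁` are self-adjoint, `Y : H₀ → H₁` is linear
(all encoded as operators on `H` supported on the appropriate blocks), and
`X = [[I, Y*],[0, I]]·[[W, 0],[0, Z]]·[[I, 0],[Y, I]] = (1 + Y*) ∘ (W + Z) ∘ (1 + Y)`.
`Zp` is the Moore–Penrose pseudoinverse of `Z` (characterized by the four Penrose
equations).  For each `u ∈ H₀` the set of pairs `(w, v) ∈ H₀ × H₁` with `X(u+v) = w` is
exactly `{(Wu, -Z⁺ZYu + v₁) : v₁ ∈ ker Z}`. -/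
theorem stmt_6
    {𝕂 : Type*} [RCLike 𝕂]
    {H : Type*} [NormedAddCommGroup H] [InnerProductSpace 𝕂 H] [FiniteDimensional 𝕂 H]
    (P0 P1 : H →ₗ[𝕂] H)
    (hP0 : P0 ∘ₗ P0 = P0) (hP0sa : LinearMap.adjoint P0 = P0)
    (hP1 : P1 ∘ₗ P1 = P1) (hP1sa : LinearMap.adjoint P1 = P1)
    (hsum : P0 + P1 = 1)
    (W Z Y X : H →ₗ[𝕂] H)
    (hW : P0 ∘ₗ (W ∘ₗ P0) = W) (hWsa : LinearMap.adjoint W = W)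
    (hZ : P1 ∘ₗ (Z ∘ₗ P1) = Z) (hZsa : LinearMap.adjoint Z = Z)
    (hY : P1 ∘ₗ (Y ∘ₗ P0) = Y)
    (hX : X = (1 + LinearMap.adjoint Y) ∘ₗ ((W + Z) ∘ₗ (1 + Y)))
    (Zp : H →ₗ[𝕂] H)
    (hZp1 : Zp ∘ₗ (Z ∘ₗ Zp) = Zp) (hZp2 : Z ∘ₗ (Zp ∘ₗ Z) = Z)
    (hZp3 : LinearMap.adjoint (Zp ∘ₗ Z) = Zp ∘ₗ Z)
    (hZp4 : LinearMap.adjoint (Z ∘ₗ Zp) = Z ∘ₗ Zp) :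
    ∀ u : H, P0 u = u →
      ∀ w v : H,
        (P0 w = w ∧ P1 v = v ∧ X (u + v) = w) ↔
          (w = W u ∧ ∃ v₁ : H, P1 v₁ = v₁ ∧ Z v₁ = 0 ∧ v = -(Zp (Z (Y u))) + v₁) :=
  stmt_6_general P0 P1 hP0 hP0sa hsum W Z Y X hW hZ hZsa hY hX Zp hZp2 hZp3
end

section
/- Let H = H₀ ⊕ H₁ be an orthogonal decomposition of a finite-dimensional inner product space, and suppose X is a linear operator on H of the form X = [[I, Y*],[0, I]] · [[W, 0],[0, Z]] · [[I, 0],[Y, I]] with W : H₀ → H₀ and Z : H₁ → H₁ self-adjoint and Y : H₀ → H₁ linear, and assume Z ≥ 0. Then for every u ∈ H₀, ⟨u, Wu⟩ equals the minimum over v ∈ H₁ of ⟨u + v, X(u + v)⟩ (these inner products are real), and the set of minimizers is exactly { −Z⁺ZYu + v₁ : v₁ ∈ ker Z }, where Z⁺ is the Moore–Penrose pseudoinverse of Z. -/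
/-!
Since `Y` kills `H₁`, `⟪u + v, X (u + v)⟫ = ⟪u + w, (W + Z) (u + w)⟫` with `w = v + Y u ∈ H₁`,
and the block-diagonal form of `W + Z` splits this as `⟪u, W u⟫ + ⟪w, Z w⟫`. As `Z ≥ 0`, the
second term is nonnegative, vanishes at `v = -Y u`, and vanishes exactly when `Z w = 0`; since
`Z Z⁺ Z = Z`, this says that `v + Z⁺ Z Y u ∈ ker Z`, and `v + Z⁺ Z Y u ∈ H₁` because `Z⁺ Z` is
self-adjoint and kills `H₀`.
-/

open LinearMap RCLike

open scoped InnerProductSpace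

section Module

variable {R M : Type*} [Ring R] [AddCommGroup M] [Module R M]

theorem LinearMap.apply_eq_zero_of_add_eq_one {P Q : M →ₗ[R] M} (h : P + Q = 1) {x : M}
    (hx : Q x = x) : P x = 0 := by
  have hPQ : P x + Q x = x := by simpa using congr($h x)
  rwa [hx, add_eq_right] at hPQ

variable {P Q A B : M →ₗ[R] M}

theorem LinearMap.apply_eq_zero_of_comp_comp_eq (hA : P ∘ₗ (B ∘ₗ Q) = A) {x : M}
    (hx : Q x = 0) : A x = 0 := by
  simp [← hA, hx]

theorem LinearMap.comp_eq_of_comp_comp_eq (hA : P ∘ₗ (B ∘ₗ Q) = A) (hQ : Q ∘ₗ Q = Q) :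
    A ∘ₗ Q = A := by
  rw [← hA, comp_assoc, comp_assoc, hQ]

theorem LinearMap.apply_apply_eq_of_comp_comp_eq (hA : P ∘ₗ (B ∘ₗ Q) = A) (hP : P ∘ₗ P = P)
    (x : M) : P (A x) = A x := by
  rw [← hA, ← comp_apply P, ← comp_assoc, hP]

theorem LinearMap.map_add_eq_zero_iff_of_inner_inverse {Z Zp : M →ₗ[R] M} (hZp : Z ∘ₗ (Zp ∘ₗ Z) = Z)
    {v x : M} (hv : P v = v) (hx : P (Zp (Z x)) = Zp (Z x)) :
    Z (v + x) = 0 ↔ ∃ v₁, P v₁ = v₁ ∧ Z v₁ = 0 ∧ v = -(Zp (Z x)) + v₁ := by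
  have hZZpZ : Z (Zp (Z x)) = Z x := congr($hZp x)
  constructor
  · intro h
    refine ⟨v + Zp (Z x), by rw [map_add, hv, hx], ?_, by abel⟩
    rwa [map_add, hZZpZ, ← map_add]
  · rintro ⟨v₁, -, hv₁, rfl⟩
    simp [hZZpZ, hv₁]

end Module

section InnerProductSpace

variable {𝕂 H : Type*} [RCLike 𝕂] [NormedAddCommGroup H] [InnerProductSpace 𝕂 H]

theorem LinearMap.IsPositive.map_eq_zero_of_re_inner_eq_zero {T : H →ₗ[𝕂] H}
    (hT : T.IsPositive) {x : H} (hx : re ⟪x, T x⟫_𝕂 = 0) : T x = 0 := by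
  set b := ‖T x‖ ^ 2
  set c := re ⟪T x, T (T x)⟫_𝕂
  have hc : 0 ≤ c := hT.re_inner_nonneg_right (T x)
  -- expand `t ↦ ⟪x + t T x, T (x + t T x)⟫`, a nonnegative real quadratic with no constant term
  have hquad : ∀ t : ℝ, 0 ≤ 2 * t * b + t ^ 2 * c := by
    intro t
    have ht := hT.re_inner_nonneg_right (x + (t : 𝕂) • T x)
    have hsymm : ⟪x, T (T x)⟫_𝕂 = ⟪T x, T x⟫_𝕂 := (hT.isSymmetric x (T x)).symm
    simp only [map_add, map_smul, inner_add_left, inner_add_right, inner_smul_left,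
      inner_smul_right, conj_ofReal, hsymm, mul_re, ofReal_re, ofReal_im, hx,
      inner_self_eq_norm_sq, inner_self_im] at ht
    nlinarith [ht]
  have hb : b = 0 := by
    have h := hquad (-(b / (c + 1)))
    have hexp : (c + 1) ^ 2 * (2 * -(b / (c + 1)) * b + (-(b / (c + 1))) ^ 2 * c)
        = -b ^ 2 * (c + 2) := by field_simp; ring
    nlinarith [mul_nonneg (sq_nonneg (c + 1)) h, sq_nonneg b]
  simpa [b] using hb

variable [FiniteDimensional 𝕂 H]

theorem LinearMap.inner_apply_eq_zero_of_comp_comp_eq {P Q B A : H →ₗ[𝕂] H}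
    (hA : P ∘ₗ (B ∘ₗ Q) = A) (hP : adjoint P = P) {y : H} (hy : P y = 0) (x : H) :
    ⟪y, A x⟫_𝕂 = 0 := by
  rw [← hA, comp_apply, ← adjoint_inner_left, hP, hy, inner_zero_left]

theorem LinearMap.comp_eq_of_comp_eq_of_adjoint_eq {A P : H →ₗ[𝕂] H} (hA : adjoint A = A)
    (hP : adjoint P = P) (h : A ∘ₗ P = A) : P ∘ₗ A = A := by
  simpa only [adjoint_comp, hA, hP] using congr(adjoint $h)

theorem LinearMap.inner_apply_eq_of_eq_adjoint_comp {X D Y : H →ₗ[𝕂] H}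
    (hX : X = (1 + adjoint Y) ∘ₗ (D ∘ₗ (1 + Y))) (x : H) :
    ⟪x, X x⟫_𝕂 = ⟪(1 + Y) x, D ((1 + Y) x)⟫_𝕂 := by
  simp only [hX, comp_apply, add_apply, Module.End.one_apply, inner_add_left, inner_add_right,
    adjoint_inner_right]

theorem LinearMap.inner_add_apply_add_of_blockDiagonal {P₀ P₁ W Z : H →ₗ[𝕂] H}
    (hsum : P₀ + P₁ = 1) (hP₀ : adjoint P₀ = P₀) (hP₁ : adjoint P₁ = P₁)
    (hW : P₀ ∘ₗ (W ∘ₗ P₀) = W) (hZ : P₁ ∘ₗ (Z ∘ₗ P₁) = Z) {u w : H} (hu : P₀ u = u)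
    (hw : P₁ w = w) :
    ⟪u + w, (W + Z) (u + w)⟫_𝕂 = ⟪u, W u⟫_𝕂 + ⟪w, Z w⟫_𝕂 := by
  have hP₀w : P₀ w = 0 := apply_eq_zero_of_add_eq_one hsum hw
  have hP₁u : P₁ u = 0 := apply_eq_zero_of_add_eq_one ((add_comm P₀ P₁).symm.trans hsum) hu
  simp only [add_apply, map_add, apply_eq_zero_of_comp_comp_eq hW hP₀w,
    apply_eq_zero_of_comp_comp_eq hZ hP₁u, inner_add_left, inner_add_right,
    inner_apply_eq_zero_of_comp_comp_eq hW hP₀ hP₀w,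
    inner_apply_eq_zero_of_comp_comp_eq hZ hP₁ hP₁u]
  simp

end InnerProductSpace

theorem stmt_7_general
    {𝕂 : Type*} [RCLike 𝕂]
    {H : Type*} [NormedAddCommGroup H] [InnerProductSpace 𝕂 H] [FiniteDimensional 𝕂 H]
    (P0 P1 : H →ₗ[𝕂] H)
    (hP0sa : LinearMap.adjoint P0 = P0)
    (hP1 : P1 ∘ₗ P1 = P1) (hP1sa : LinearMap.adjoint P1 = P1)
    (hsum : P0 + P1 = 1)
    (W Z Y X : H →ₗ[𝕂] H)
    (hW : P0 ∘ₗ (W ∘ₗ P0) = W)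
    (hZ : P1 ∘ₗ (Z ∘ₗ P1) = Z) (hZsa : LinearMap.adjoint Z = Z)
    (hZpos : ∀ x : H, 0 ≤ RCLike.re (inner 𝕂 x (Z x) : 𝕂))
    (hY : P1 ∘ₗ (Y ∘ₗ P0) = Y)
    (hX : X = (1 + LinearMap.adjoint Y) ∘ₗ ((W + Z) ∘ₗ (1 + Y)))
    (Zp : H →ₗ[𝕂] H)
    (hZp2 : Z ∘ₗ (Zp ∘ₗ Z) = Z)
    (hZp3 : LinearMap.adjoint (Zp ∘ₗ Z) = Zp ∘ₗ Z) :
    ∀ u : H, P0 u = u →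
      IsLeast {r : ℝ | ∃ v : H, P1 v = v ∧ r = RCLike.re (inner 𝕂 (u + v) (X (u + v)) : 𝕂)}
        (RCLike.re (inner 𝕂 u (W u) : 𝕂)) ∧
      (∀ v : H, P1 v = v →
        (RCLike.re (inner 𝕂 (u + v) (X (u + v)) : 𝕂) = RCLike.re (inner 𝕂 u (W u) : 𝕂) ↔
          ∃ v₁ : H, P1 v₁ = v₁ ∧ Z v₁ = 0 ∧ v = -(Zp (Z (Y u))) + v₁)) := by
  intro u hu
  have hZpositive : Z.IsPositive :=
    ⟨(isSymmetric_iff_isSelfAdjoint Z).2 hZsa, fun x => inner_re_symm (𝕜 := 𝕂) x _ ▸ hZpos x⟩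
  have hYu : P1 (Y u) = Y u := apply_apply_eq_of_comp_comp_eq hY hP1 u
  have hsplit : ∀ v, P1 v = v →
      re ⟪u + v, X (u + v)⟫_𝕂 = re ⟪u, W u⟫_𝕂 + re ⟪v + Y u, Z (v + Y u)⟫_𝕂 := by
    intro v hv
    have hYv : Y v = 0 := apply_eq_zero_of_comp_comp_eq hY (apply_eq_zero_of_add_eq_one hsum hv)
    have h1Y : (1 + Y) (u + v) = u + (v + Y u) := by
      simp only [map_add, LinearMap.add_apply, Module.End.one_apply, hYv]; abel
    rw [inner_apply_eq_of_eq_adjoint_comp hX, h1Y,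
      inner_add_apply_add_of_blockDiagonal hsum hP0sa hP1sa hW hZ hu (by rw [map_add, hv, hYu]),
      map_add]
  have hZpZ : P1 ∘ₗ (Zp ∘ₗ Z) = Zp ∘ₗ Z := comp_eq_of_comp_eq_of_adjoint_eq hZp3 hP1sa <| by
    rw [comp_assoc, comp_eq_of_comp_comp_eq hZ hP1]
  have hYneg : P1 (-(Y u)) = -(Y u) := by rw [map_neg, hYu]
  refine ⟨⟨⟨-(Y u), hYneg, by rw [hsplit _ hYneg]; simp⟩, ?_⟩, ?_⟩
  · rintro r ⟨v, hv, rfl⟩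
    linarith [hsplit v hv, hZpos (v + Y u)]
  · intro v hv
    rw [hsplit v hv, add_eq_left, ← map_add_eq_zero_iff_of_inner_inverse hZp2 hv congr($hZpZ (Y u))]
    exact ⟨hZpositive.map_eq_zero_of_re_inner_eq_zero, fun h => by simp [h]⟩

/-- Fundamental minimization principle: with the setting of the
block-factorized operator `X = (1 + Y*) ∘ (W + Z) ∘ (1 + Y)` on a finite-dimensional
inner product space `H = H₀ ⊕ H₁` (projections `P0, P1`), `W, Z` self-adjoint, `Z ≥ 0`,
and `Zp` the Moore–Penrose pseudoinverse of `Z`: for every `u ∈ H₀` the real quantity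
`⟨u, Wu⟩` is the minimum of `⟨u+v, X(u+v)⟩` over `v ∈ H₁`, and the set of minimizers is
exactly `{-Z⁺ZYu + v₁ : v₁ ∈ ker Z}`. -/
theorem stmt_7
    {𝕂 : Type*} [RCLike 𝕂]
    {H : Type*} [NormedAddCommGroup H] [InnerProductSpace 𝕂 H] [FiniteDimensional 𝕂 H]
    (P0 P1 : H →ₗ[𝕂] H)
    (hP0 : P0 ∘ₗ P0 = P0) (hP0sa : LinearMap.adjoint P0 = P0)
    (hP1 : P1 ∘ₗ P1 = P1) (hP1sa : LinearMap.adjoint P1 = P1)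
    (hsum : P0 + P1 = 1)
    (W Z Y X : H →ₗ[𝕂] H)
    (hW : P0 ∘ₗ (W ∘ₗ P0) = W) (hWsa : LinearMap.adjoint W = W)
    (hZ : P1 ∘ₗ (Z ∘ₗ P1) = Z) (hZsa : LinearMap.adjoint Z = Z)
    (hZpos : ∀ x : H, 0 ≤ RCLike.re (inner 𝕂 x (Z x) : 𝕂))
    (hY : P1 ∘ₗ (Y ∘ₗ P0) = Y)
    (hX : X = (1 + LinearMap.adjoint Y) ∘ₗ ((W + Z) ∘ₗ (1 + Y)))
    (Zp : H →ₗ[𝕂] H)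
    (hZp1 : Zp ∘ₗ (Z ∘ₗ Zp) = Zp) (hZp2 : Z ∘ₗ (Zp ∘ₗ Z) = Z)
    (hZp3 : LinearMap.adjoint (Zp ∘ₗ Z) = Zp ∘ₗ Z)
    (hZp4 : LinearMap.adjoint (Z ∘ₗ Zp) = Z ∘ₗ Zp) :
    ∀ u : H, P0 u = u →
      IsLeast {r : ℝ | ∃ v : H, P1 v = v ∧ r = RCLike.re (inner 𝕂 (u + v) (X (u + v)) : 𝕂)}
        (RCLike.re (inner 𝕂 u (W u) : 𝕂)) ∧
      (∀ v : H, P1 v = v →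
        (RCLike.re (inner 𝕂 (u + v) (X (u + v)) : 𝕂) = RCLike.re (inner 𝕂 u (W u) : 𝕂) ↔
          ∃ v₁ : H, P1 v₁ = v₁ ∧ Z v₁ = 0 ∧ v = -(Zp (Z (Y u))) + v₁)) :=
  stmt_7_general P0 P1 hP0sa hP1 hP1sa hsum W Z Y X hW hZ hZsa hZpos hY hX Zp hZp2 hZp3
end

section
/- Let (H, 𝒰, ℰ, 𝒥, σ) be a Z-problem with dim H < ∞ and suppose the compression of σ to 𝒰 ⊕ ℰ is self-adjoint (i.e. σ₀₀* = σ₀₀, σ₁₁* = σ₁₁, σ₀₁* = σ₁₀). Then: (a) there exists some E₀ ∈ 𝒰 at which the Z-problem has exactly one solution if and only if ker σ₁₁ = {0}; and (b) there exists a function f : 𝒰 → 𝒰 such that J₀ = f(E₀) whenever E₀ ∈ 𝒰 and (J₀, E, J) is a solution of the Z-problem at E₀, if and only if ker σ₁₁ ⊆ ker σ₀₁. -/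
/-!
A solution `(J₀, E, J)` at `E₀` is determined by its `ℰ`-component: `E ∈ ℰ` must satisfy
`P₁ σ (E₀ + E) = 0`, and then `J₀ = P₀ σ (E₀ + E)` and `J = P₂ σ (E₀ + E)`. So the solutions at `E₀`
are parametrized by a coset of `ker σ₁₁ ⊆ ℰ`, or there are none; at `E₀ = 0` there is always the zero
solution, which gives (a). Along such a coset `J₀` moves by `σ₀₁` of elements of `ker σ₁₁`, which
gives (b).
-/

theorem CompleteOrthogonalIdempotents.of_mul_eq_zero_of_add_add_eq_one {A : Type*} [Ring A]
    {p q r : A} (hp : IsIdempotentElem p) (hq : IsIdempotentElem q) (hr : IsIdempotentElem r)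
    (hpq : p * q = 0) (hpr : p * r = 0) (hqr : q * r = 0) (h : p + q + r = 1) :
    CompleteOrthogonalIdempotents ![p, q, r] := by
  have hqp : q * p = 0 := by simpa [mul_add, mul_one, hq.eq, hqr] using congrArg (q * ·) h
  have hrp : r * p = 0 := by simpa [add_mul, one_mul, hp.eq, hqp] using congrArg (· * p) h
  have hrq : r * q = 0 := by simpa [add_mul, one_mul, hq.eq, hpq] using congrArg (· * q) h
  refine ⟨⟨?_, ?_⟩, ?_⟩
  · intro i; fin_cases i <;> assumption
  · intro i j hij
    fin_cases i <;> fin_cases j <;> simp_all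
  · simpa [Fin.sum_univ_three] using h

section

variable {R M ι : Type*} [Ring R] [AddCommGroup M] [Module R M] {e : ι → Module.End R M}

theorem OrthogonalIdempotents.apply_apply_self (he : OrthogonalIdempotents e) (i : ι) (x : M) :
    e i (e i x) = e i x :=
  congr($(he.idem i) x)

theorem OrthogonalIdempotents.apply_apply_eq_zero (he : OrthogonalIdempotents e) {i j : ι}
    (hij : i ≠ j) (x : M) : e i (e j x) = 0 :=
  congr($(he.ortho hij) x)

theorem CompleteOrthogonalIdempotents.sum_apply [Fintype ι] (he : CompleteOrthogonalIdempotents e)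
    (x : M) : ∑ i, e i x = x := by
  simpa using congr($(he.complete) x)

end

namespace ZProblem

variable {R M : Type*} [Ring R] [AddCommGroup M] [Module R M] (P₀ P₁ P₂ σ : Module.End R M)

def IsSolution (E₀ : M) (t : M × M × M) : Prop :=
  P₀ t.1 = t.1 ∧ P₁ t.2.1 = t.2.1 ∧ P₂ t.2.2 = t.2.2 ∧ t.1 + t.2.2 = σ (E₀ + t.2.1)

def solutionOf (E₀ E : M) : M × M × M :=
  (P₀ (σ (E₀ + E)), E, P₂ (σ (E₀ + E)))

variable {P₀ P₁ P₂ σ}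

theorem isSolution_iff (he : CompleteOrthogonalIdempotents ![P₀, P₁, P₂]) {E₀ : M}
    {t : M × M × M} :
    IsSolution P₀ P₁ P₂ σ E₀ t ↔
      ∃ E, P₁ E = E ∧ P₁ (σ (E₀ + E)) = 0 ∧ solutionOf P₀ P₂ σ E₀ E = t := by
  have ho := he.toOrthogonalIdempotents
  constructor
  · obtain ⟨J₀, E, J⟩ := t
    rintro ⟨hJ₀, hE, hJ, hsol⟩
    dsimp only at hJ₀ hE hJ hsol
    have h02 : ∀ x, P₀ (P₂ x) = 0 := ho.apply_apply_eq_zero (i := 0) (j := 2) (by decide)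
    have h10 : ∀ x, P₁ (P₀ x) = 0 := ho.apply_apply_eq_zero (i := 1) (j := 0) (by decide)
    have h12 : ∀ x, P₁ (P₂ x) = 0 := ho.apply_apply_eq_zero (i := 1) (j := 2) (by decide)
    have h20 : ∀ x, P₂ (P₀ x) = 0 := ho.apply_apply_eq_zero (i := 2) (j := 0) (by decide)
    have h₀ : P₀ (J₀ + J) = J₀ := by rw [map_add, ← hJ, h02, add_zero, hJ₀]
    have h₁ : P₁ (J₀ + J) = 0 := by rw [map_add, ← hJ₀, ← hJ, h10, h12, add_zero]
    have h₂ : P₂ (J₀ + J) = J := by rw [map_add, ← hJ₀, h20, zero_add, hJ]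
    rw [hsol] at h₀ h₁ h₂
    exact ⟨E, hE, h₁, by rw [solutionOf, h₀, h₂]⟩
  · rintro ⟨E, hE, hker, rfl⟩
    refine ⟨ho.apply_apply_self 0 _, hE, ho.apply_apply_self 2 _, ?_⟩
    have hsum : ∀ y, P₀ y + P₁ y + P₂ y = y := by simpa [Fin.sum_univ_three] using he.sum_apply
    show P₀ (σ (E₀ + E)) + P₂ (σ (E₀ + E)) = σ (E₀ + E)
    simpa only [hker, add_zero] using hsum (σ (E₀ + E))

theorem isSolution_zero : IsSolution P₀ P₁ P₂ σ 0 0 := by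
  simp [IsSolution]

theorem IsSolution.fst_eq (he : CompleteOrthogonalIdempotents ![P₀, P₁, P₂])
    (hker : LinearMap.ker (P₁ ∘ₗ (σ ∘ₗ P₁)) ≤ LinearMap.ker (P₀ ∘ₗ (σ ∘ₗ P₁))) {E₀ : M}
    {t t' : M × M × M} (ht : IsSolution P₀ P₁ P₂ σ E₀ t) (ht' : IsSolution P₀ P₁ P₂ σ E₀ t') :
    t.1 = t'.1 := by
  obtain ⟨E, hE, hk, rfl⟩ := (isSolution_iff he).1 ht
  obtain ⟨E', hE', hk', rfl⟩ := (isSolution_iff he).1 ht'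
  have hσ : σ (E₀ + E) = σ (E₀ + E') + σ (E - E') := by rw [← map_add]; abel_nf
  have hd : P₁ (E - E') = E - E' := by rw [map_sub, hE, hE']
  have hmem : E - E' ∈ LinearMap.ker (P₁ ∘ₗ (σ ∘ₗ P₁)) := by
    simp only [LinearMap.mem_ker, LinearMap.comp_apply, hd]
    rwa [hσ, map_add, hk', zero_add] at hk
  have h₀ : P₀ (σ (E - E')) = 0 := by
    simpa only [LinearMap.mem_ker, LinearMap.comp_apply, hd] using hker hmem
  simp only [solutionOf, hσ, map_add, h₀, add_zero]

theorem exists_existsUnique_isSolution_iff (he : CompleteOrthogonalIdempotents ![P₀, P₁, P₂]) :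
    (∃ E₀, P₀ E₀ = E₀ ∧ ∃! t, IsSolution P₀ P₁ P₂ σ E₀ t) ↔
      ∀ x, P₁ x = x → (P₁ ∘ₗ (σ ∘ₗ P₁)) x = 0 → x = 0 := by
  constructor
  · rintro ⟨E₀, -, t, ht, huniq⟩ x hx hker
    obtain ⟨E, hE, hk, rfl⟩ := (isSolution_iff he).1 ht
    have hσx : P₁ (σ x) = 0 := by simpa [hx] using hker
    have hsol : IsSolution P₀ P₁ P₂ σ E₀ (solutionOf P₀ P₂ σ E₀ (E + x)) :=
      (isSolution_iff he).2 ⟨E + x, by rw [map_add, hE, hx],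
        by rw [← add_assoc, map_add σ, map_add, hk, hσx, add_zero], rfl⟩
    simpa [solutionOf] using congrArg (·.2.1) (huniq _ hsol)
  · intro hinj
    refine ⟨0, map_zero P₀, 0, isSolution_zero, fun t ht => ?_⟩
    obtain ⟨E, hE, hk, rfl⟩ := (isSolution_iff he).1 ht
    rw [hinj E hE (by simpa [hE] using hk)]
    simp [solutionOf]

theorem exists_fst_eq_iff (he : CompleteOrthogonalIdempotents ![P₀, P₁, P₂]) :
    (∃ f : M → M, ∀ E₀ t, P₀ E₀ = E₀ → IsSolution P₀ P₁ P₂ σ E₀ t → t.1 = f E₀) ↔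
      LinearMap.ker (P₁ ∘ₗ (σ ∘ₗ P₁)) ≤ LinearMap.ker (P₀ ∘ₗ (σ ∘ₗ P₁)) := by
  constructor
  · rintro ⟨f, hf⟩ x hx
    simp only [LinearMap.mem_ker, LinearMap.comp_apply] at hx ⊢
    have hsol : IsSolution P₀ P₁ P₂ σ 0 (solutionOf P₀ P₂ σ 0 (P₁ x)) :=
      (isSolution_iff he).2
        ⟨P₁ x, he.toOrthogonalIdempotents.apply_apply_self 1 x, by rwa [zero_add], rfl⟩
    simpa [solutionOf] using
      (hf 0 _ (map_zero P₀) hsol).trans (hf 0 0 (map_zero P₀) isSolution_zero).symm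
  · intro hker
    exact ⟨fun E₀ => (Classical.epsilon (IsSolution P₀ P₁ P₂ σ E₀)).1,
      fun E₀ t _ ht => ht.fst_eq he hker (Classical.epsilon_spec ⟨t, ht⟩)⟩

end ZProblem

theorem stmt_11_general
    {𝕂 : Type*} [RCLike 𝕂]
    {H : Type*} [NormedAddCommGroup H] [InnerProductSpace 𝕂 H]
    (P0 P1 P2 : H →ₗ[𝕂] H)
    (hP0 : P0 ∘ₗ P0 = P0)
    (hP1 : P1 ∘ₗ P1 = P1)
    (hP2 : P2 ∘ₗ P2 = P2)
    (h01 : P0 ∘ₗ P1 = 0) (h02 : P0 ∘ₗ P2 = 0) (h12 : P1 ∘ₗ P2 = 0)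
    (hsum : P0 + P1 + P2 = 1)
    (σ : H →ₗ[𝕂] H) :
    ((∃ E₀ : H, P0 E₀ = E₀ ∧
        ∃! t : H × H × H, P0 t.1 = t.1 ∧ P1 t.2.1 = t.2.1 ∧ P2 t.2.2 = t.2.2 ∧
          t.1 + t.2.2 = σ (E₀ + t.2.1)) ↔
      (∀ x : H, P1 x = x → (P1 ∘ₗ (σ ∘ₗ P1)) x = 0 → x = 0)) ∧
    ((∃ f : H → H, ∀ E₀ J₀ E J : H,
        P0 E₀ = E₀ → P0 J₀ = J₀ → P1 E = E → P2 J = J →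
          J₀ + J = σ (E₀ + E) → J₀ = f E₀) ↔
      LinearMap.ker (P1 ∘ₗ (σ ∘ₗ P1)) ≤ LinearMap.ker (P0 ∘ₗ (σ ∘ₗ P1))) := by
  have he : CompleteOrthogonalIdempotents ![P0, P1, P2] :=
    .of_mul_eq_zero_of_add_add_eq_one hP0 hP1 hP2 h01 h02 h12 hsum
  refine ⟨ZProblem.exists_existsUnique_isSolution_iff he, ?_⟩
  rw [← ZProblem.exists_fst_eq_iff he]
  simp only [ZProblem.IsSolution, Prod.forall, and_imp]

/-- Existence/uniqueness criteria for the Z-problem: the Z-problem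
`(H, 𝒰, ℰ, 𝒥, σ)` on a finite-dimensional Hilbert space is encoded by mutually orthogonal
projections `P0, P1, P2` with sum `1` (ranges `𝒰, ℰ, 𝒥`), and the compression of `σ` to
`𝒰 ⊕ ℰ` is self-adjoint (`σ₀₀* = σ₀₀`, `σ₁₁* = σ₁₁`, `σ₀₁* = σ₁₀`).  Then:
(a) the Z-problem has exactly one solution at some `E₀ ∈ 𝒰` iff the block `σ₁₁` has
trivial kernel on `ℰ`; (b) there is a function `f` with `J₀ = f(E₀)` for every solution
`(J₀, E, J)` at every `E₀ ∈ 𝒰` iff `ker σ₁₁ ⊆ ker σ₀₁`. -/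
theorem stmt_11
    {𝕂 : Type*} [RCLike 𝕂]
    {H : Type*} [NormedAddCommGroup H] [InnerProductSpace 𝕂 H] [FiniteDimensional 𝕂 H]
    (P0 P1 P2 : H →ₗ[𝕂] H)
    (hP0 : P0 ∘ₗ P0 = P0) (hP0sa : LinearMap.adjoint P0 = P0)
    (hP1 : P1 ∘ₗ P1 = P1) (hP1sa : LinearMap.adjoint P1 = P1)
    (hP2 : P2 ∘ₗ P2 = P2) (hP2sa : LinearMap.adjoint P2 = P2)
    (h01 : P0 ∘ₗ P1 = 0) (h02 : P0 ∘ₗ P2 = 0) (h12 : P1 ∘ₗ P2 = 0)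
    (hsum : P0 + P1 + P2 = 1)
    (σ : H →ₗ[𝕂] H)
    (hσ00 : LinearMap.adjoint (P0 ∘ₗ (σ ∘ₗ P0)) = P0 ∘ₗ (σ ∘ₗ P0))
    (hσ11 : LinearMap.adjoint (P1 ∘ₗ (σ ∘ₗ P1)) = P1 ∘ₗ (σ ∘ₗ P1))
    (hσ01 : LinearMap.adjoint (P0 ∘ₗ (σ ∘ₗ P1)) = P1 ∘ₗ (σ ∘ₗ P0)) :
    ((∃ E₀ : H, P0 E₀ = E₀ ∧
        ∃! t : H × H × H, P0 t.1 = t.1 ∧ P1 t.2.1 = t.2.1 ∧ P2 t.2.2 = t.2.2 ∧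
          t.1 + t.2.2 = σ (E₀ + t.2.1)) ↔
      (∀ x : H, P1 x = x → (P1 ∘ₗ (σ ∘ₗ P1)) x = 0 → x = 0)) ∧
    ((∃ f : H → H, ∀ E₀ J₀ E J : H,
        P0 E₀ = E₀ → P0 J₀ = J₀ → P1 E = E → P2 J = J →
          J₀ + J = σ (E₀ + E) → J₀ = f E₀) ↔
      LinearMap.ker (P1 ∘ₗ (σ ∘ₗ P1)) ≤ LinearMap.ker (P0 ∘ₗ (σ ∘ₗ P1))) :=
  stmt_11_general P0 P1 P2 hP0 hP1 hP2 h01 h02 h12 hsum σ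
end

section
/- Let 𝒜, ℬ, 𝒞 be finite-dimensional inner product spaces over 𝕂 (𝕂 = ℝ or ℂ), and let U : 𝒜 → ℬ and T : ℬ → 𝒞 be linear maps with T ∘ U = 0. Then ℬ is the internal orthogonal direct sum ℬ = ran T* ⊕ ker(T*T + UU*) ⊕ ran U of three mutually orthogonal subspaces; moreover ran(T*T + UU*) = ran T* ⊕ ran U and ker(T*T + UU*) = ker T ∩ ker U*. -/
/-!
With `L = T*T + UU*` one has `re ⟪L x, x⟫ = ‖T x‖² + ‖U* x‖²`, so `ker L = ker T ∩ ker U*`.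
Taking orthogonal complements turns this into `(ker L)ᗮ = ran T* + ran U`, and since `L` is
self-adjoint, `ran L = (ker L)ᗮ`. The relation `T U = 0` makes `ran T*` and `ran U` orthogonal.
-/

open LinearMap Submodule

section

variable {𝕜 E F G : Type*} [RCLike 𝕜]
  [NormedAddCommGroup E] [InnerProductSpace 𝕜 E]
  [NormedAddCommGroup F] [InnerProductSpace 𝕜 F]
  [NormedAddCommGroup G] [InnerProductSpace 𝕜 G]

theorem Submodule.orthogonal_inf [FiniteDimensional 𝕜 E] (K₁ K₂ : Submodule 𝕜 E) :
    (K₁ ⊓ K₂)ᗮ = K₁ᗮ ⊔ K₂ᗮ := by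
  rw [← orthogonal_orthogonal (K₁ᗮ ⊔ K₂ᗮ), ← inf_orthogonal, orthogonal_orthogonal,
    orthogonal_orthogonal]

namespace LinearMap

variable [FiniteDimensional 𝕜 F] [FiniteDimensional 𝕜 G]

theorem ker_adjoint_comp_self_add_adjoint_comp_self [FiniteDimensional 𝕜 E]
    (A : E →ₗ[𝕜] F) (B : E →ₗ[𝕜] G) :
    ker (adjoint A ∘ₗ A + adjoint B ∘ₗ B) = ker A ⊓ ker B := by
  refine le_antisymm (fun x hx => ?_) fun x ⟨hA, hB⟩ => by simp_all
  have hsum : ‖A x‖ ^ 2 + ‖B x‖ ^ 2 = 0 := by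
    have := congrArg (fun y => RCLike.re (inner 𝕜 y x)) (mem_ker.mp hx)
    simpa [inner_add_left, adjoint_inner_left, inner_self_eq_norm_sq] using this
  simpa using (add_eq_zero_iff_of_nonneg (sq_nonneg _) (sq_nonneg _)).mp hsum

theorem isOrtho_range_adjoint_range {A : F →ₗ[𝕜] G} {B : E →ₗ[𝕜] F} (h : A ∘ₗ B = 0) :
    range (adjoint A) ⟂ range B := by
  rw [isOrtho_comm, isOrtho_iff_le, orthogonal_range, adjoint_adjoint, range_le_ker_iff]
  exact h

end LinearMap

end

/-- Abstract Hodge decomposition: for finite-dimensional inner product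
spaces `𝓐, 𝓑, 𝓒` and linear maps `U : 𝓐 → 𝓑`, `T : 𝓑 → 𝓒` with `T ∘ U = 0`, the space `𝓑`
is the internal orthogonal direct sum `ran T* ⊕ ker(T*T + UU*) ⊕ ran U` of three mutually
orthogonal subspaces; moreover `ran(T*T + UU*) = ran T* ⊕ ran U` and
`ker(T*T + UU*) = ker T ∩ ker U*`. -/
theorem stmt_16
    {𝕂 : Type*} [RCLike 𝕂]
    {𝓐 : Type*} [NormedAddCommGroup 𝓐] [InnerProductSpace 𝕂 𝓐] [FiniteDimensional 𝕂 𝓐]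
    {𝓑 : Type*} [NormedAddCommGroup 𝓑] [InnerProductSpace 𝕂 𝓑] [FiniteDimensional 𝕂 𝓑]
    {𝓒 : Type*} [NormedAddCommGroup 𝓒] [InnerProductSpace 𝕂 𝓒] [FiniteDimensional 𝕂 𝓒]
    (U : 𝓐 →ₗ[𝕂] 𝓑) (T : 𝓑 →ₗ[𝕂] 𝓒) (hTU : T ∘ₗ U = 0) :
    Submodule.IsOrtho (LinearMap.range (LinearMap.adjoint T))
      (LinearMap.ker (LinearMap.adjoint T ∘ₗ T + U ∘ₗ LinearMap.adjoint U)) ∧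
    Submodule.IsOrtho (LinearMap.range (LinearMap.adjoint T)) (LinearMap.range U) ∧
    Submodule.IsOrtho
      (LinearMap.ker (LinearMap.adjoint T ∘ₗ T + U ∘ₗ LinearMap.adjoint U))
      (LinearMap.range U) ∧
    (LinearMap.range (LinearMap.adjoint T) ⊔
        LinearMap.ker (LinearMap.adjoint T ∘ₗ T + U ∘ₗ LinearMap.adjoint U) ⊔
        LinearMap.range U = ⊤) ∧
    (LinearMap.range (LinearMap.adjoint T ∘ₗ T + U ∘ₗ LinearMap.adjoint U) =
      LinearMap.range (LinearMap.adjoint T) ⊔ LinearMap.range U) ∧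
    (LinearMap.ker (LinearMap.adjoint T ∘ₗ T + U ∘ₗ LinearMap.adjoint U) =
      LinearMap.ker T ⊓ LinearMap.ker (LinearMap.adjoint U)) := by
  set L := adjoint T ∘ₗ T + U ∘ₗ adjoint U
  have hker : ker L = ker T ⊓ ker (adjoint U) := by
    simpa using ker_adjoint_comp_self_add_adjoint_comp_self T (adjoint U)
  have hperp : (ker L)ᗮ = range (adjoint T) ⊔ range U := by
    rw [hker, orthogonal_inf, orthogonal_ker, orthogonal_ker, adjoint_adjoint]
  have hL : adjoint L = L := by simp [L, adjoint_comp]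
  refine ⟨?_, isOrtho_range_adjoint_range hTU, ?_, ?_, ?_, hker⟩
  · exact (isOrtho_orthogonal_left (ker L)).mono_left (hperp ▸ le_sup_left)
  · exact (isOrtho_orthogonal_right (ker L)).mono_right (hperp ▸ le_sup_right)
  · rw [sup_right_comm, ← hperp, sup_comm]
    exact sup_orthogonal_of_hasOrthogonalProjection
  · rw [← hperp, orthogonal_ker, hL]
end

section
/- Let (P, Eg, σ) be an electrical network on a finite linear digraph without loops (so σ is a self-adjoint positive-semidefinite linear operator on F(Eg,𝕂)), let P = P∂ ∪ P° be a partition of the nodes into nonempty disjoint sets of boundary and interior nodes, and let Kσ = −D•σD. Set H₀ = {u ∈ F(P,𝕂) : u vanishes on P°} and H₁ = {u ∈ F(P,𝕂) : u vanishes on P∂}, with blocks (Kσ)ᵢⱼ of Kσ taken with respect to the orthogonal decomposition F(P,𝕂) = H₀ ⊕ H₁. Then: Kσ is self-adjoint and positive semidefinite; for every f ∈ F(P∂,𝕂) there exists u ∈ F(P,𝕂) with (Kσu)(p) = 0 for all p ∈ P° and u(p) = f(p) for all p ∈ P∂; and for any such u, the boundary current satisfies (Kσu)|_{P∂} = ι₀*((Kσ)₀₀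 − (Kσ)₀₁((Kσ)₁₁)⁺(Kσ)₁₀)ι₀ f, where ι₀ : F(P∂,𝕂) → F(P,𝕂) is extension by zero (with range H₀), ι₀* is its adjoint (restriction to P∂), and ⁺ is the Moore–Penrose pseudoinverse. -/
/-!
Since the divergence is minus the adjoint of the gradient, `Kσ = D* σ D` is positive. For a
positive `K`, `⟪z, K z⟫ = 0` forces `K z = 0`; hence the kernel of the interior block
`A = Γ₁ K Γ₁` is annihilated by `K Γ₁`, so `Γ₁ K` takes values in `(ker A)ᗮ = range A`, where
any `B` with `A B A = A` inverts `A`. Thus `u₀ = x - Γ₁ B Γ₁ K x` is harmonic at the interior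
nodes. Two solutions with the same boundary values differ by an interior-supported `z` with
`Γ₁ K z = 0`, hence `K z = 0`; so `K u = K u₀`, whose boundary part is the Schur complement
applied to `x = ι₀ f`.
-/

open scoped ComplexConjugate InnerProductSpace

namespace LinearMap

variable {𝕂 E : Type*} [RCLike 𝕂] [NormedAddCommGroup E] [InnerProductSpace 𝕂 E]
  {K Γ : E →ₗ[𝕂] E}

/-- Perturbing `x` along `K x` gives `0 ≤ 2 t ‖K x‖² + t² re ⟪K x, K (K x)⟫` for all real `t`,
whose discriminant forces `‖K x‖ = 0`. -/
theorem IsPositive.apply_eq_zero_of_re_inner_eq_zero (hK : K.IsPositive) {x : E}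
    (hx : RCLike.re ⟪x, K x⟫_𝕂 = 0) : K x = 0 := by
  have hquad : ∀ t : ℝ,
      0 ≤ RCLike.re ⟪K x, K (K x)⟫_𝕂 * (t * t) + 2 * ‖K x‖ ^ 2 * t + 0 := by
    intro t
    have h := hK.re_inner_nonneg_right (x + (t : 𝕂) • K x)
    have hsymm : ⟪x, K (K x)⟫_𝕂 = ⟪K x, K x⟫_𝕂 := (hK.isSymmetric x (K x)).symm
    simp only [map_add, map_smul, inner_add_left, inner_add_right, inner_smul_left,
      inner_smul_right, hsymm, RCLike.conj_ofReal, inner_self_eq_norm_sq_to_K] at h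
    simp only [map_add, RCLike.re_ofReal_mul, hx, ← RCLike.ofReal_pow,
      RCLike.ofReal_re] at h
    nlinarith [h]
  have hdisc := discrim_le_zero hquad
  rw [discrim, mul_zero, sub_zero] at hdisc
  have h : 2 * ‖K x‖ ^ 2 = 0 := pow_eq_zero_iff two_ne_zero |>.mp (hdisc.antisymm (sq_nonneg _))
  simpa using h

theorem IsPositive.apply_eq_zero_of_compression_apply_eq_zero (hK : K.IsPositive)
    (hΓ : Γ.IsSymmetric) {z : E} (hz : Γ (K (Γ z)) = 0) : K (Γ z) = 0 :=
  hK.apply_eq_zero_of_re_inner_eq_zero <| by rw [hΓ, hz, inner_zero_right, map_zero]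

theorem IsPositive.mem_range_compression [FiniteDimensional 𝕂 E] (hK : K.IsPositive)
    (hΓ : Γ.IsSymmetric) (v : E) : Γ (K v) ∈ range (Γ ∘ₗ K ∘ₗ Γ) := by
  have hA : (Γ ∘ₗ K ∘ₗ Γ).IsSymmetric := fun x y => by
    simp only [comp_apply, hΓ _ y, hK.isSymmetric _ (Γ y), hΓ x]
  rw [← Submodule.orthogonal_orthogonal (range _), hA.orthogonal_range]
  intro c hc
  have hKc : K (Γ c) = 0 := hK.apply_eq_zero_of_compression_apply_eq_zero hΓ hc
  rw [← hΓ, ← hK.isSymmetric, hKc, inner_zero_left]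

theorem IsPositive.compression_apply_sub_generalizedInverse [FiniteDimensional 𝕂 E]
    (hK : K.IsPositive) (hΓ : Γ.IsSymmetric) {B : E →ₗ[𝕂] E}
    (hB : (Γ ∘ₗ (K ∘ₗ Γ)) ∘ₗ (B ∘ₗ (Γ ∘ₗ (K ∘ₗ Γ))) = Γ ∘ₗ (K ∘ₗ Γ)) (x : E) :
    Γ (K (x - Γ (B (Γ (K x))))) = 0 := by
  obtain ⟨w, hw⟩ := hK.mem_range_compression hΓ x
  have hAB : Γ (K (Γ (B (Γ (K x))))) = Γ (K x) := by
    rw [← hw]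
    exact congr($hB w)
  rw [map_sub, map_sub, hAB, sub_self]

end LinearMap

section Network

variable {𝕂 : Type*} [RCLike 𝕂] {P Eg : Type*} [Fintype P] [Fintype Eg]

theorem adjoint_gradient [DecidableEq P] (em ep : Eg → P)
    (D : EuclideanSpace 𝕂 P →ₗ[𝕂] EuclideanSpace 𝕂 Eg)
    (hD : ∀ (f : EuclideanSpace 𝕂 P) (e : Eg), D f e = f (ep e) - f (em e))
    (Ddiv : EuclideanSpace 𝕂 Eg →ₗ[𝕂] EuclideanSpace 𝕂 P)
    (hDdiv : ∀ (g : EuclideanSpace 𝕂 Eg) (p : P),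
      Ddiv g p = (∑ e ∈ Finset.univ.filter (fun e => em e = p), g e) -
        ∑ e ∈ Finset.univ.filter (fun e => ep e = p), g e) :
    LinearMap.adjoint D = -Ddiv := by
  refine ((LinearMap.eq_adjoint_iff _ _).mpr fun g u => ?_).symm
  have hfiber : ∀ m : Eg → P,
      ∑ p, u p * conj (∑ e ∈ Finset.univ.filter (fun e => m e = p), g e) =
        ∑ e, u (m e) * conj (g e) := fun m => by
    simp only [map_sum, Finset.mul_sum]
    rw [← Finset.sum_fiberwise Finset.univ m]
    exact Finset.sum_congr rfl fun p _ => Finset.sum_congr rfl fun e he => by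
      rw [(Finset.mem_filter.mp he).2]
  simp only [PiLp.inner_apply, RCLike.inner_apply, LinearMap.neg_apply, PiLp.neg_apply,
    hDdiv, hD, map_sub, neg_sub, mul_sub, sub_mul, Finset.sum_sub_distrib, hfiber]

theorem isPositive_kirchhoff [DecidableEq P] (em ep : Eg → P)
    (σ : EuclideanSpace 𝕂 Eg →ₗ[𝕂] EuclideanSpace 𝕂 Eg) (hσsa : LinearMap.adjoint σ = σ)
    (hσpos : ∀ g : EuclideanSpace 𝕂 Eg, 0 ≤ RCLike.re (inner 𝕂 g (σ g) : 𝕂))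
    (D : EuclideanSpace 𝕂 P →ₗ[𝕂] EuclideanSpace 𝕂 Eg)
    (hD : ∀ (f : EuclideanSpace 𝕂 P) (e : Eg), D f e = f (ep e) - f (em e))
    (Ddiv : EuclideanSpace 𝕂 Eg →ₗ[𝕂] EuclideanSpace 𝕂 P)
    (hDdiv : ∀ (g : EuclideanSpace 𝕂 Eg) (p : P),
      Ddiv g p = (∑ e ∈ Finset.univ.filter (fun e => em e = p), g e) -
        ∑ e ∈ Finset.univ.filter (fun e => ep e = p), g e) :
    (-(Ddiv ∘ₗ (σ ∘ₗ D))).IsPositive := by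
  have hσ : σ.IsPositive :=
    ⟨(σ.isSymmetric_iff_isSelfAdjoint).mpr hσsa, fun g => inner_re_symm (𝕜 := 𝕂) g _ ▸ hσpos g⟩
  rw [← LinearMap.neg_comp, ← adjoint_gradient em ep D hD Ddiv hDdiv]
  exact hσ.adjoint_conj D

theorem isSymmetric_of_apply_eq_ite_zero (s : Set P) [DecidablePred (· ∈ s)]
    (Γ : EuclideanSpace 𝕂 P →ₗ[𝕂] EuclideanSpace 𝕂 P)
    (hΓ : ∀ (u : EuclideanSpace 𝕂 P) (p : P), Γ u p = if p ∈ s then 0 else u p) :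
    Γ.IsSymmetric := fun x y => by
  simp only [PiLp.inner_apply, RCLike.inner_apply, hΓ]
  exact Finset.sum_congr rfl fun p _ => by split_ifs <;> simp

theorem adjoint_extendByZero_apply (s : Set P) [DecidablePred (· ∈ s)]
    (ι : EuclideanSpace 𝕂 s →ₗ[𝕂] EuclideanSpace 𝕂 P)
    (hι : ∀ (f : EuclideanSpace 𝕂 s) (p : P), ι f p = if hp : p ∈ s then f ⟨p, hp⟩ else 0)
    (w : EuclideanSpace 𝕂 P) (q : s) : LinearMap.adjoint ι w q = w q := by
  classical
  have hsingle : ι (EuclideanSpace.single q 1) = EuclideanSpace.single (q : P) 1 := by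
    ext p
    by_cases hp : p ∈ s
    · simp [hι, hp, PiLp.single_apply, Subtype.ext_iff]
    · simp [hι, hp, show p ≠ q from fun h => hp (h ▸ q.2)]
  have h := LinearMap.adjoint_inner_right ι (EuclideanSpace.single q 1) w
  simpa [hsingle, EuclideanSpace.inner_single_left] using h

end Network

theorem stmt_19_general
    {𝕂 : Type*} [RCLike 𝕂]
    {P Eg : Type*} [Fintype P] [Fintype Eg] [DecidableEq P]
    (em ep : Eg → P)
    (Pb : Set P) [DecidablePred (· ∈ Pb)]
    -- the network conductivity: self-adjoint and positive semidefinite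
    (σ : EuclideanSpace 𝕂 Eg →ₗ[𝕂] EuclideanSpace 𝕂 Eg)
    (hσsa : LinearMap.adjoint σ = σ)
    (hσpos : ∀ g : EuclideanSpace 𝕂 Eg, 0 ≤ RCLike.re (inner 𝕂 g (σ g) : 𝕂))
    -- discrete gradient and divergence
    (D : EuclideanSpace 𝕂 P →ₗ[𝕂] EuclideanSpace 𝕂 Eg)
    (hD : ∀ (f : EuclideanSpace 𝕂 P) (e : Eg), D f e = f (ep e) - f (em e))
    (Ddiv : EuclideanSpace 𝕂 Eg →ₗ[𝕂] EuclideanSpace 𝕂 P)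
    (hDdiv : ∀ (g : EuclideanSpace 𝕂 Eg) (p : P),
      Ddiv g p = (∑ e ∈ Finset.univ.filter (fun e => em e = p), g e) -
        ∑ e ∈ Finset.univ.filter (fun e => ep e = p), g e)
    -- the Kirchhoff operator `Kσ = -D•σD`
    (Kσ : EuclideanSpace 𝕂 P →ₗ[𝕂] EuclideanSpace 𝕂 P)
    (hKσ : Kσ = -(Ddiv ∘ₗ (σ ∘ₗ D)))
    -- the orthogonal projections onto `H₀ = ker (·|_{P°})` and `H₁ = ker (·|_{P∂})`
    (Γ0 Γ1 : EuclideanSpace 𝕂 P →ₗ[𝕂] EuclideanSpace 𝕂 P)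
    (hΓ0 : ∀ (u : EuclideanSpace 𝕂 P) (p : P), Γ0 u p = if p ∈ Pb then u p else 0)
    (hΓ1 : ∀ (u : EuclideanSpace 𝕂 P) (p : P), Γ1 u p = if p ∈ Pb then 0 else u p)
    -- the extension-by-zero map `ι0 : F(P∂,𝕂) → F(P,𝕂)`
    (ι0 : EuclideanSpace 𝕂 ↥Pb →ₗ[𝕂] EuclideanSpace 𝕂 P)
    (hι0 : ∀ (f : EuclideanSpace 𝕂 ↥Pb) (p : P),
      ι0 f p = if hp : p ∈ Pb then f ⟨p, hp⟩ else 0)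
    -- `B = ((Kσ)₁₁)⁺`, the Moore–Penrose pseudoinverse of `(Kσ)₁₁ = Γ1 Kσ Γ1`
    (B : EuclideanSpace 𝕂 P →ₗ[𝕂] EuclideanSpace 𝕂 P)
    (hB2 : (Γ1 ∘ₗ (Kσ ∘ₗ Γ1)) ∘ₗ (B ∘ₗ (Γ1 ∘ₗ (Kσ ∘ₗ Γ1))) = Γ1 ∘ₗ (Kσ ∘ₗ Γ1)) :
    LinearMap.adjoint Kσ = Kσ ∧
    (∀ u : EuclideanSpace 𝕂 P, 0 ≤ RCLike.re (inner 𝕂 u (Kσ u) : 𝕂)) ∧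
    ∀ f : EuclideanSpace 𝕂 ↥Pb,
      (∃ u : EuclideanSpace 𝕂 P,
        (∀ p : P, p ∉ Pb → Kσ u p = 0) ∧ (∀ (p : P) (hp : p ∈ Pb), u p = f ⟨p, hp⟩)) ∧
      (∀ u : EuclideanSpace 𝕂 P,
        (∀ p : P, p ∉ Pb → Kσ u p = 0) → (∀ (p : P) (hp : p ∈ Pb), u p = f ⟨p, hp⟩) →
        (LinearMap.adjoint ι0) (Kσ u) =
          (LinearMap.adjoint ι0)
            (((Γ0 ∘ₗ (Kσ ∘ₗ Γ0)) -
              (Γ0 ∘ₗ (Kσ ∘ₗ Γ1)) ∘ₗ (B ∘ₗ (Γ1 ∘ₗ (Kσ ∘ₗ Γ0)))) (ι0 f))) := by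
  have hK : Kσ.IsPositive := hKσ ▸ isPositive_kirchhoff em ep σ hσsa hσpos D hD Ddiv hDdiv
  have hΓ1sym : Γ1.IsSymmetric := isSymmetric_of_apply_eq_ite_zero Pb Γ1 hΓ1
  refine ⟨hK.adjoint_eq, hK.re_inner_nonneg_right, fun f => ?_⟩
  set x := ι0 f
  set u₀ := x - Γ1 (B (Γ1 (Kσ x)))
  have hharm : ∀ p ∉ Pb, Kσ u₀ p = 0 := fun p hp => by
    simpa only [hΓ1, hp, if_false, PiLp.zero_apply] using
      congr($(hK.compression_apply_sub_generalizedInverse hΓ1sym hB2 x) p)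
  have hu₀ : ∀ (p : P) (hp : p ∈ Pb), u₀ p = f ⟨p, hp⟩ := fun p hp => by
    simp [u₀, x, hι0, hΓ1, hp]
  refine ⟨⟨u₀, hharm, hu₀⟩, fun u hint hbnd => ?_⟩
  have hKu : Kσ u = Kσ u₀ := by
    have hz : Γ1 (u - u₀) = u - u₀ := by
      ext p
      by_cases hp : p ∈ Pb <;> simp [hΓ1, hp, hbnd, hu₀]
    have hKz : Γ1 (Kσ (Γ1 (u - u₀))) = 0 := by
      ext p
      by_cases hp : p ∈ Pb <;> simp [hz, hΓ1, hp, hint, hharm]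
    have hKz' := hK.apply_eq_zero_of_compression_apply_eq_zero hΓ1sym hKz
    rw [hz, map_sub, sub_eq_zero] at hKz'
    exact hKz'
  have hΓ0x : Γ0 x = x := by
    ext p
    by_cases hp : p ∈ Pb <;> simp [x, hΓ0, hι0, hp]
  ext q
  simp [adjoint_extendByZero_apply Pb ι0 hι0, hKu, u₀, hΓ0x, hΓ0, q.2]

/-- Schur-complement representation of the Dirichlet-to-Neumann map of
an electrical network `(P, Eg, σ)` on a finite linear digraph without loops, with
boundary nodes `Pb` and interior nodes `Pbᶜ` (both nonempty).  Here `D` is the discrete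
gradient, `Ddiv` the discrete divergence, `Kσ = -D•σD` the Kirchhoff operator, `Γ0, Γ1`
the orthogonal projections onto `H₀` (functions vanishing on the interior) and `H₁`
(functions vanishing on the boundary), `ι0` the extension-by-zero map
`F(P∂,𝕂) → F(P,𝕂)` (whose adjoint is restriction to the boundary), and `B` the
Moore–Penrose pseudoinverse of the block `(Kσ)₁₁ = Γ1 Kσ Γ1`.  Then `Kσ` is self-adjoint
and positive semidefinite, the discrete Dirichlet problem is solvable for every boundary
datum `f`, and for any solution `u` the boundary current is
`(Kσ u)|_{P∂} = ι0*((Kσ)₀₀ - (Kσ)₀₁((Kσ)₁₁)⁺(Kσ)₁₀) ι0 f`. -/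
theorem stmt_19
    {𝕂 : Type*} [RCLike 𝕂]
    {P Eg : Type*} [Fintype P] [Nonempty P] [Fintype Eg] [Nonempty Eg] [DecidableEq P]
    (em ep : Eg → P) (hloop : ∀ e, em e ≠ ep e)
    (Pb : Set P) [DecidablePred (· ∈ Pb)] (hPb : Pb.Nonempty) (hPi : Pbᶜ.Nonempty)
    -- the network conductivity: self-adjoint and positive semidefinite
    (σ : EuclideanSpace 𝕂 Eg →ₗ[𝕂] EuclideanSpace 𝕂 Eg)
    (hσsa : LinearMap.adjoint σ = σ)
    (hσpos : ∀ g : EuclideanSpace 𝕂 Eg, 0 ≤ RCLike.re (inner 𝕂 g (σ g) : 𝕂))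
    -- discrete gradient and divergence
    (D : EuclideanSpace 𝕂 P →ₗ[𝕂] EuclideanSpace 𝕂 Eg)
    (hD : ∀ (f : EuclideanSpace 𝕂 P) (e : Eg), D f e = f (ep e) - f (em e))
    (Ddiv : EuclideanSpace 𝕂 Eg →ₗ[𝕂] EuclideanSpace 𝕂 P)
    (hDdiv : ∀ (g : EuclideanSpace 𝕂 Eg) (p : P),
      Ddiv g p = (∑ e ∈ Finset.univ.filter (fun e => em e = p), g e) -
        ∑ e ∈ Finset.univ.filter (fun e => ep e = p), g e)
    -- the Kirchhoff operator `Kσ = -D•σD`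
    (Kσ : EuclideanSpace 𝕂 P →ₗ[𝕂] EuclideanSpace 𝕂 P)
    (hKσ : Kσ = -(Ddiv ∘ₗ (σ ∘ₗ D)))
    -- the orthogonal projections onto `H₀ = ker (·|_{P°})` and `H₁ = ker (·|_{P∂})`
    (Γ0 Γ1 : EuclideanSpace 𝕂 P →ₗ[𝕂] EuclideanSpace 𝕂 P)
    (hΓ0 : ∀ (u : EuclideanSpace 𝕂 P) (p : P), Γ0 u p = if p ∈ Pb then u p else 0)
    (hΓ1 : ∀ (u : EuclideanSpace 𝕂 P) (p : P), Γ1 u p = if p ∈ Pb then 0 else u p)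
    -- the extension-by-zero map `ι0 : F(P∂,𝕂) → F(P,𝕂)`
    (ι0 : EuclideanSpace 𝕂 ↥Pb →ₗ[𝕂] EuclideanSpace 𝕂 P)
    (hι0 : ∀ (f : EuclideanSpace 𝕂 ↥Pb) (p : P),
      ι0 f p = if hp : p ∈ Pb then f ⟨p, hp⟩ else 0)
    -- `B = ((Kσ)₁₁)⁺`, the Moore–Penrose pseudoinverse of `(Kσ)₁₁ = Γ1 Kσ Γ1`
    (B : EuclideanSpace 𝕂 P →ₗ[𝕂] EuclideanSpace 𝕂 P)
    (hB1 : B ∘ₗ ((Γ1 ∘ₗ (Kσ ∘ₗ Γ1)) ∘ₗ B) = B)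
    (hB2 : (Γ1 ∘ₗ (Kσ ∘ₗ Γ1)) ∘ₗ (B ∘ₗ (Γ1 ∘ₗ (Kσ ∘ₗ Γ1))) = Γ1 ∘ₗ (Kσ ∘ₗ Γ1))
    (hB3 : LinearMap.adjoint (B ∘ₗ (Γ1 ∘ₗ (Kσ ∘ₗ Γ1))) = B ∘ₗ (Γ1 ∘ₗ (Kσ ∘ₗ Γ1)))
    (hB4 : LinearMap.adjoint ((Γ1 ∘ₗ (Kσ ∘ₗ Γ1)) ∘ₗ B) = (Γ1 ∘ₗ (Kσ ∘ₗ Γ1)) ∘ₗ B) :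
    LinearMap.adjoint Kσ = Kσ ∧
    (∀ u : EuclideanSpace 𝕂 P, 0 ≤ RCLike.re (inner 𝕂 u (Kσ u) : 𝕂)) ∧
    ∀ f : EuclideanSpace 𝕂 ↥Pb,
      (∃ u : EuclideanSpace 𝕂 P,
        (∀ p : P, p ∉ Pb → Kσ u p = 0) ∧ (∀ (p : P) (hp : p ∈ Pb), u p = f ⟨p, hp⟩)) ∧
      (∀ u : EuclideanSpace 𝕂 P,
        (∀ p : P, p ∉ Pb → Kσ u p = 0) → (∀ (p : P) (hp : p ∈ Pb), u p = f ⟨p, hp⟩) →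
        (LinearMap.adjoint ι0) (Kσ u) =
          (LinearMap.adjoint ι0)
            (((Γ0 ∘ₗ (Kσ ∘ₗ Γ0)) -
              (Γ0 ∘ₗ (Kσ ∘ₗ Γ1)) ∘ₗ (B ∘ₗ (Γ1 ∘ₗ (Kσ ∘ₗ Γ0)))) (ι0 f))) :=
  stmt_19_general em ep Pb σ hσsa hσpos D hD Ddiv hDdiv Kσ hKσ Γ0 Γ1 hΓ0 hΓ1 ι0 hι0 B hB2
end
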